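/- arXiv:1802.07646 — 8 statements merged into one kernel-verified Lean document; each statement's English description precedes it below -/
import Mathlib

section
/- Let G be a finite non-cyclic abelian group of order p1^{n1} p2^{n2}, where p1 < p2 are primes and n1, n2 ≥ 1, and let Pi be the Sylow pi-subgroup of G for i = 1, 2. Suppose both P1 and P2 are non-cyclic, p1 ≥ 3, and G has a maximal cyclic subgroup C of order p1 p2. Then κ(P(G)) = min{ |P1|, |P2|, |C̃| }, where |C̃| = p1 + p2 − 1. -/
/-- The power graph of a group `G`. -/
def powerGraph (G : Type*) [Group G] : SimpleGraph G where
  Adj x y := x ≠ y ∧ (x ∈ Subgroup.zpowers y ∨ y ∈ Subgroup.zpowers x)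
  symm := ⟨fun x y h => ⟨h.1.symm, h.2.symm⟩⟩
  loopless := ⟨fun x h => h.1 rfl⟩

/-- `X` is a (vertex) cut-set of the power graph of `G`:
removing `X` leaves a disconnected induced subgraph. -/
def IsCutSet {G : Type*} [Group G] (X : Set G) : Prop :=
  ¬ ((powerGraph G).induce Xᶜ).Preconnected

/-- `X` is a minimal cut-set of the power graph of `G`. -/
def IsMinimalCutSet {G : Type*} [Group G] (X : Set G) : Prop :=
  IsCutSet X ∧ ∀ x ∈ X, ¬ IsCutSet (X \ {x})

/-- `X` is a minimum cut-set of the power graph of `G`. -/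
def IsMinimumCutSet {G : Type*} [Group G] (X : Set G) : Prop :=
  IsCutSet X ∧ ∀ Y : Set G, IsCutSet Y → X.ncard ≤ Y.ncard

/-- The vertex connectivity of the power graph of `G`: the least number of vertices
whose removal disconnects the graph or leaves only one vertex. -/
noncomputable def kappa (G : Type*) [Group G] : ℕ :=
  sInf {m | ∃ X : Set G, X.ncard = m ∧ (IsCutSet X ∨ Xᶜ.ncard = 1)}

/-- `M` is a maximal cyclic subgroup of `G`: cyclic and not properly contained
in any cyclic subgroup. -/
def IsMaxCyclic {G : Type*} [Group G] (M : Subgroup G) : Prop :=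
  (∃ x : G, M = Subgroup.zpowers x) ∧
    ∀ N : Subgroup G, (∃ y : G, N = Subgroup.zpowers y) → M ≤ N → M = N

/-- The set of non-generators of a (cyclic) subgroup `M` of `G`. -/
def nonGens {G : Type*} [Group G] (M : Subgroup G) : Set G :=
  {x | x ∈ M ∧ Subgroup.zpowers x ≠ M}

/-- `Mbar M` is the union of the sets `M ∩ ⟨y⟩` over all `y ∈ G \ M`. -/
def Mbar {G : Type*} [Group G] (M : Subgroup G) : Set G :=
  ⋃ y ∈ (M : Set G)ᶜ, ((M : Set G) ∩ (Subgroup.zpowers y : Set G))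

/-- `(A, B)` is a separation of the induced subgraph of the power graph of `G` on `S`. -/
def IsSeparationOn {G : Type*} [Group G] (S A B : Set G) : Prop :=
  A.Nonempty ∧ B.Nonempty ∧ Disjoint A B ∧ A ∪ B = S ∧
    ∀ a ∈ A, ∀ b ∈ B, ¬ (powerGraph G).Adj a b

/-!
Write `G = G[q₀] × G[q₁]`, where `qᵢ = pᵢ ^ nᵢ`, `G[q] = {g | g ^ q = 1}` (so `G[qᵢ] = Pᵢ`), and the
projections are `g ↦ g ^ eᵢ` for Chinese-remainder exponents `eᵢ`.

Lower bound: let `|X| < min (q₀, q₁, p₀ + p₁ - 1)`. A survivor `g` outside both factors has among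
its powers the at least `p₀ + p₁ - 1` elements of `⟨g ^ e₀⟩ ∪ ⟨g ^ e₁⟩`, one of which survives.
Two survivors `u, u' ∈ G[q₀]` are joined along `u, u v, v, u' v, u'` for some `v ∈ G[q₁]`: every
`v` for which this path meets `X` is the `q₁`-projection of an element of `X`, and `|X| < q₁`.

Upper bound: write `C = ⟨a b⟩` with `a ∈ G[q₀]`, `b ∈ G[q₁]` of orders `p₀`, `p₁`. Maximality of
`C` makes `⟨a⟩` maximal among cyclic subgroups of `G[q₀]`, so once `P₁` is removed, the elements
whose powers contain `a` are closed under adjacency; they miss `P₀ \ ⟨a⟩ ≠ ∅` since `P₀` is not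
cyclic. Removing `C̃ = ⟨a⟩ ∪ ⟨b⟩` cuts off the generators of `C`.
-/

open Subgroup

section Group

variable {G : Type*} [Group G]

lemma pow_eq_self_of_modEq_one {x : G} {q e : ℕ} (hx : x ^ q = 1)
    (he : e ≡ 1 [MOD q]) : x ^ e = x := by
  simpa using pow_eq_pow_iff_modEq.mpr (he.of_dvd (orderOf_dvd_of_pow_eq_one hx))

lemma pow_eq_one_of_modEq_zero {x : G} {q e : ℕ} (hx : x ^ q = 1)
    (he : e ≡ 0 [MOD q]) : x ^ e = 1 := by
  simpa using pow_eq_pow_iff_modEq.mpr (he.of_dvd (orderOf_dvd_of_pow_eq_one hx))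

lemma pow_eq_one_of_mem_zpowers {x g : G} {q : ℕ} (hg : g ^ q = 1)
    (hx : x ∈ zpowers g) : x ^ q = 1 :=
  orderOf_dvd_iff_pow_eq_one.mp
    ((orderOf_dvd_of_mem_zpowers hx).trans (orderOf_dvd_of_pow_eq_one hg))

lemma pow_mem_zpowers_pow {x g : G} (e : ℕ) (hx : x ∈ zpowers g) :
    x ^ e ∈ zpowers (g ^ e) := by
  obtain ⟨k, rfl⟩ := hx
  exact ⟨k, by simp only [← zpow_natCast, ← zpow_mul, mul_comm]⟩

lemma le_orderOf_of_pow_prime_pow_eq_one {p n : ℕ} (hp : p.Prime) {g : G}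
    (hg : g ^ p ^ n = 1) (hg1 : g ≠ 1) : p ≤ orderOf g := by
  obtain ⟨k, -, hk⟩ := (Nat.dvd_prime_pow hp).mp (orderOf_dvd_of_pow_eq_one hg)
  have hk0 : k ≠ 0 := by
    rintro rfl
    exact hg1 (orderOf_eq_one_iff.mp (by rw [hk, pow_zero]))
  exact hk ▸ Nat.le_self_pow hk0 p

lemma ncard_coe_zpowers (g : G) : (zpowers g : Set G).ncard = orderOf g := by
  rw [← Nat.card_coe_set_eq, SetLike.coe_sort_coe, Nat.card_zpowers]

lemma zpowers_eq_of_mem_of_orderOf_prime [Finite G] {x g : G}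
    (hg : (orderOf g).Prime) (hx : x ∈ zpowers g) (hx1 : x ≠ 1) : zpowers x = zpowers g := by
  refine eq_of_le_of_card_ge (zpowers_le.mpr hx) ?_
  rw [Nat.card_zpowers, Nat.card_zpowers,
    (hg.eq_one_or_self_of_dvd _ (orderOf_dvd_of_mem_zpowers hx)).resolve_left
      (fun h => hx1 (orderOf_eq_one_iff.mp h))]

lemma ncard_zpowers_union_add_one [Finite G] {a b : G}
    (h : Disjoint (zpowers a) (zpowers b)) :
    ((zpowers a : Set G) ∪ zpowers b).ncard + 1 = orderOf a + orderOf b := by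
  have hinter : (zpowers a : Set G) ∩ zpowers b = {1} := by
    rw [← coe_inf, disjoint_iff.mp h, coe_bot]
  have := Set.ncard_union_add_ncard_inter (zpowers a : Set G) (zpowers b)
  rwa [hinter, Set.ncard_singleton, ncard_coe_zpowers, ncard_coe_zpowers] at this

lemma isCutSet_of_adj_closed {X A : Set G}
    (hA : ∀ g h, g ∈ A → h ∉ X → (powerGraph G).Adj g h → h ∈ A)
    {a b : G} (ha : a ∈ A) (haX : a ∉ X) (hbX : b ∉ X) (hbA : b ∉ A) : IsCutSet X := by
  intro hconn
  obtain ⟨w⟩ := hconn ⟨a, haX⟩ ⟨b, hbX⟩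
  obtain ⟨d, -, hd, hd'⟩ := w.exists_boundary_dart {v | (v : G) ∈ A} ha hbA
  exact hd' (hA _ _ hd d.toProd.2.2 d.adj)

lemma reachable_of_mem_zpowers {X : Set G} {g h : G} (hg : g ∈ Xᶜ) (hh : h ∈ Xᶜ)
    (hgh : h ∈ zpowers g) : ((powerGraph G).induce Xᶜ).Reachable ⟨g, hg⟩ ⟨h, hh⟩ := by
  by_cases e : g = h
  · subst e; rfl
  · exact SimpleGraph.Adj.reachable ⟨e, Or.inr hgh⟩

lemma isCutSet_nonGens {M : Subgroup G} (hM : IsMaxCyclic M) (hMG : M ≠ ⊤) :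
    IsCutSet (nonGens M) := by
  obtain ⟨c, rfl⟩ := hM.1
  obtain ⟨g, hg⟩ : ∃ g, g ∉ zpowers c := by
    by_contra! h
    exact hMG (eq_top_iff.mpr fun g _ => h g)
  refine isCutSet_of_adj_closed (A := {g | zpowers g = zpowers c}) ?_ rfl
    (fun h => h.2 rfl) (fun h => hg h.1) (fun h => hg (h ▸ mem_zpowers g))
  rintro x y (hx : zpowers x = _) hy ⟨-, hyx | hxy⟩
  · exact (hM.2 _ ⟨y, rfl⟩ (hx ▸ zpowers_le.mpr hyx)).symm
  · by_contra h
    exact hy ⟨hx ▸ hxy, h⟩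

lemma kappa_le_ncard {X : Set G} (hX : IsCutSet X) : kappa G ≤ X.ncard :=
  Nat.sInf_le ⟨X, rfl, Or.inl hX⟩

lemma le_kappa [Finite G] {k : ℕ} (hcut : ∀ X : Set G, IsCutSet X → k ≤ X.ncard)
    (hk : k < Nat.card G) : k ≤ kappa G := by
  refine le_csInf ⟨_, {1}ᶜ, rfl, Or.inr (by simp)⟩ ?_
  rintro _ ⟨X, rfl, hX | hX⟩
  · exact hcut X hX
  · have := Set.ncard_add_ncard_compl X
    omega

end Group

lemma one_lt_of_card_eq_prime_pow {H : Type*} [Group H] {p n : ℕ} (hp : p.Prime)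
    (hH : Nat.card H = p ^ n) (hnc : ¬ IsCyclic H) : 1 < n := by
  by_contra! h
  interval_cases n
  · have := (Nat.card_eq_one_iff_unique.mp (hH.trans (pow_zero p))).1
    exact hnc inferInstance
  · exact hnc (isCyclic_of_prime_card (hp := ⟨hp⟩) (hH.trans (pow_one p)))

namespace Sylow

variable {G : Type*} {p : ℕ} [Fact p.Prime]

lemma card_eq_pow_of_card_eq_mul [Group G] [Finite G] (P : Sylow p G) {n m : ℕ}
    (hG : Nat.card G = p ^ n * m) (hpm : ¬ p ∣ m) : Nat.card P = p ^ n := by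
  have hm : m ≠ 0 := by rintro rfl; exact hpm (dvd_zero p)
  rw [P.card_eq_multiplicity, hG,
    Nat.factorization_mul (pow_ne_zero n (Fact.out : p.Prime).ne_zero) hm,
    Finsupp.add_apply, Nat.Prime.factorization_pow Fact.out, Finsupp.single_eq_same,
    Nat.factorization_eq_zero_of_not_dvd hpm, add_zero]

lemma coe_eq_setOf_pow_eq_one [CommGroup G] [Finite G] (P : Sylow p G) {n : ℕ}
    (hP : Nat.card P = p ^ n) : (P : Set G) = {g | g ^ p ^ n = 1} := by
  ext g
  refine ⟨fun hg => orderOf_dvd_iff_pow_eq_one.mp (hP ▸ orderOf_dvd_natCard _ hg), fun hg => ?_⟩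
  obtain ⟨k, -, hk⟩ := (Nat.dvd_prime_pow Fact.out).mp (orderOf_dvd_of_pow_eq_one hg)
  have : IsPGroup p (zpowers g) := IsPGroup.of_card (by rw [Nat.card_zpowers, hk])
  exact this.le_sylow_of_normal P (mem_zpowers g)

end Sylow

/-- Exponents `ea, eb` such that `g ↦ g ^ ea` and `g ↦ g ^ eb` are the projections of `G`
onto its `qa`- and `qb`-torsion, i.e. onto the factors of `G ≃ G[qa] × G[qb]`. -/
structure TorsionSplitting (G : Type*) [CommGroup G] where
  qa : ℕ
  qb : ℕ
  ea : ℕ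
  eb : ℕ
  pow_mul_eq_one : ∀ g : G, g ^ (qa * qb) = 1
  ea_modEq_one : ea ≡ 1 [MOD qa]
  ea_modEq_zero : ea ≡ 0 [MOD qb]
  eb_modEq_zero : eb ≡ 0 [MOD qa]
  eb_modEq_one : eb ≡ 1 [MOD qb]

namespace TorsionSplitting

variable {G : Type*} [CommGroup G] (S : TorsionSplitting G)

def swap : TorsionSplitting G where
  qa := S.qb
  qb := S.qa
  ea := S.eb
  eb := S.ea
  pow_mul_eq_one g := mul_comm S.qa S.qb ▸ S.pow_mul_eq_one g
  ea_modEq_one := S.eb_modEq_one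
  ea_modEq_zero := S.eb_modEq_zero
  eb_modEq_zero := S.ea_modEq_zero
  eb_modEq_one := S.ea_modEq_one

def ofCoprime {qa qb : ℕ} (hco : qa.Coprime qb) (h : ∀ g : G, g ^ (qa * qb) = 1) :
    TorsionSplitting G where
  qa := qa
  qb := qb
  ea := Nat.chineseRemainder hco 1 0
  eb := Nat.chineseRemainder hco 0 1
  pow_mul_eq_one := h
  ea_modEq_one := (Nat.chineseRemainder hco 1 0).2.1
  ea_modEq_zero := (Nat.chineseRemainder hco 1 0).2.2
  eb_modEq_zero := (Nat.chineseRemainder hco 0 1).2.1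
  eb_modEq_one := (Nat.chineseRemainder hco 0 1).2.2

lemma coprime : S.qa.Coprime S.qb := by
  have h1 := S.ea_modEq_one.of_dvd (Nat.gcd_dvd_left S.qa S.qb)
  have h0 := S.ea_modEq_zero.of_dvd (Nat.gcd_dvd_right S.qa S.qb)
  exact Nat.dvd_one.mp ((Nat.modEq_zero_iff_dvd.mp (h1.symm.trans h0)))

variable {S}

lemma pow_ea_eq_self {g : G} (hg : g ^ S.qa = 1) : g ^ S.ea = g :=
  pow_eq_self_of_modEq_one hg S.ea_modEq_one

lemma pow_eb_eq_one {g : G} (hg : g ^ S.qa = 1) : g ^ S.eb = 1 :=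
  pow_eq_one_of_modEq_zero hg S.eb_modEq_zero

variable (S)

lemma pow_ea_pow_qa_eq_one (g : G) : (g ^ S.ea) ^ S.qa = 1 := by
  obtain ⟨k, hk⟩ := Nat.modEq_zero_iff_dvd.mp S.ea_modEq_zero
  rw [← pow_mul, hk, mul_right_comm, mul_comm S.qb, pow_mul, S.pow_mul_eq_one, one_pow]

lemma pow_ea_mul_pow_eb (g : G) : g ^ S.ea * g ^ S.eb = g := by
  have h : S.ea + S.eb ≡ 1 [MOD S.qa * S.qb] :=
    (Nat.modEq_and_modEq_iff_modEq_mul S.coprime).mp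
      ⟨by simpa using S.ea_modEq_one.add S.eb_modEq_zero,
       by simpa using S.ea_modEq_zero.add S.eb_modEq_one⟩
  rw [← pow_add, pow_eq_self_of_modEq_one (S.pow_mul_eq_one g) h]

variable {S}

lemma eq_one_of_pow_qa_of_pow_qb {g : G} (ha : g ^ S.qa = 1) (hb : g ^ S.qb = 1) : g = 1 := by
  have hea : g ^ S.ea = 1 := S.swap.pow_eb_eq_one hb
  rw [← S.pow_ea_mul_pow_eb g, pow_eb_eq_one ha, hea, one_mul]

lemma pow_ea_ne_one {g : G} (hg : g ^ S.qb ≠ 1) : g ^ S.ea ≠ 1 := by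
  intro h
  apply hg
  rw [← S.pow_ea_mul_pow_eb g, h, one_mul]
  exact S.swap.pow_ea_pow_qa_eq_one g

lemma disjoint_zpowers {a b : G} (ha : a ^ S.qa = 1) (hb : b ^ S.qb = 1) :
    Disjoint (zpowers a) (zpowers b) :=
  disjoint_def.mpr fun hxa hxb =>
    eq_one_of_pow_qa_of_pow_qb (pow_eq_one_of_mem_zpowers ha hxa) (pow_eq_one_of_mem_zpowers hb hxb)

lemma mul_pow_ea {a b : G} (ha : a ^ S.qa = 1) (hb : b ^ S.qb = 1) : (a * b) ^ S.ea = a := by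
  have hbe : b ^ S.ea = 1 := S.swap.pow_eb_eq_one hb
  rw [mul_pow, pow_ea_eq_self ha, hbe, mul_one]

lemma mem_zpowers_mul_left {a b : G} (ha : a ^ S.qa = 1) (hb : b ^ S.qb = 1) :
    a ∈ zpowers (a * b) :=
  mem_zpowers_iff.mpr ⟨S.ea, by rw [zpow_natCast, mul_pow_ea ha hb]⟩

lemma mem_zpowers_mul_right {a b : G} (ha : a ^ S.qa = 1) (hb : b ^ S.qb = 1) :
    b ∈ zpowers (a * b) :=
  mul_comm b a ▸ S.swap.mem_zpowers_mul_left hb ha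

lemma orderOf_pow_ea {c : G} {pa pb : ℕ} (hc : orderOf c = pa * pb) (hpa : pa ∣ S.qa)
    (hpb : pb ∣ S.qb) : orderOf (c ^ S.ea) = pa := by
  have hoa : orderOf (c ^ S.ea) ∣ S.qa := orderOf_dvd_of_pow_eq_one (S.pow_ea_pow_qa_eq_one c)
  have hob : orderOf (c ^ S.eb) ∣ S.qb := orderOf_dvd_of_pow_eq_one (S.swap.pow_ea_pow_qa_eq_one c)
  have hprod : orderOf c = orderOf (c ^ S.ea) * orderOf (c ^ S.eb) := by
    conv_lhs => rw [← S.pow_ea_mul_pow_eb c]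
    exact (Commute.all _ _).orderOf_mul_eq_mul_orderOf_of_coprime (S.coprime.of_dvd hoa hob)
  refine Nat.dvd_antisymm ((S.coprime.of_dvd hoa hpb).dvd_of_dvd_mul_right ?_)
    ((S.coprime.of_dvd hpa hob).dvd_of_dvd_mul_right ?_)
  · exact hc ▸ orderOf_pow_dvd _
  · rw [← hprod, hc]
    exact dvd_mul_right _ _

lemma mem_zpowers_of_isMaxCyclic {a b y : G} (hC : IsMaxCyclic (zpowers (a * b)))
    (ha : a ^ S.qa = 1) (hb : b ^ S.qb = 1) (hy : y ^ S.qa = 1) (hay : a ∈ zpowers y) :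
    y ∈ zpowers a := by
  have hy_mem := S.mem_zpowers_mul_left hy hb
  have hle : zpowers (a * b) ≤ zpowers (y * b) :=
    zpowers_le.mpr (mul_mem (zpowers_le.mpr hy_mem hay) (S.mem_zpowers_mul_right hy hb))
  have hyC := pow_mem_zpowers_pow S.ea ((hC.2 _ ⟨_, rfl⟩ hle) ▸ hy_mem)
  rwa [mul_pow_ea ha hb, pow_ea_eq_self hy] at hyC

lemma coe_zpowers_subset_nonGens {a b : G} (ha : a ^ S.qa = 1) (hb : b ^ S.qb = 1)
    (hbp : (orderOf b).Prime) : (zpowers a : Set G) ⊆ nonGens (zpowers (a * b)) := by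
  refine fun x hx => ⟨zpowers_le.mpr (S.mem_zpowers_mul_left ha hb) hx, fun h => ?_⟩
  have hbx : b ∈ zpowers x := h ▸ S.mem_zpowers_mul_right ha hb
  exact hbp.ne_one (orderOf_eq_one_iff.mpr
    (eq_one_of_pow_qa_of_pow_qb (pow_eq_one_of_mem_zpowers ha (zpowers_le.mpr hx hbx)) hb))

variable [Finite G]

lemma isCutSet_setOf_pow_qb_eq_one {a u : G} (ha : a ^ S.qa = 1) (hap : (orderOf a).Prime)
    (hmax : ∀ y : G, y ^ S.qa = 1 → a ∈ zpowers y → y ∈ zpowers a) (hu : u ^ S.qa = 1)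
    (hua : u ∉ zpowers a) : IsCutSet {g : G | g ^ S.qb = 1} := by
  refine isCutSet_of_adj_closed (A := {g | a ∈ zpowers g}) ?_ (mem_zpowers a)
    (fun h => hap.ne_one (orderOf_eq_one_iff.mpr (eq_one_of_pow_qa_of_pow_qb ha h)))
    (fun h => hua (eq_one_of_pow_qa_of_pow_qb hu h ▸ one_mem _))
    (fun h => hua (hmax u hu h))
  rintro g h (hg : a ∈ zpowers g) hh ⟨-, hgh | hhg⟩
  · exact zpowers_le.mpr hgh hg
  · have hga : g ^ S.ea ∈ zpowers a :=
      hmax _ (S.pow_ea_pow_qa_eq_one g) (pow_ea_eq_self ha ▸ pow_mem_zpowers_pow S.ea hg)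
    have hha : zpowers (h ^ S.ea) = zpowers a :=
      zpowers_eq_of_mem_of_orderOf_prime hap
        (zpowers_le.mpr hga (pow_mem_zpowers_pow S.ea hhg)) (pow_ea_ne_one hh)
    exact zpowers_le.mpr (npow_mem_zpowers h S.ea) (hha ▸ mem_zpowers _)

lemma isCutSet_of_isMaxCyclic {a b : G} (hC : IsMaxCyclic (zpowers (a * b)))
    (ha : a ^ S.qa = 1) (hb : b ^ S.qb = 1) (hap : (orderOf a).Prime)
    (hcard : orderOf a < {g : G | g ^ S.qa = 1}.ncard) : IsCutSet {g : G | g ^ S.qb = 1} := by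
  obtain ⟨u, hu, hua⟩ := Set.exists_mem_notMem_of_ncard_lt_ncard
    ((ncard_coe_zpowers a).trans_lt hcard)
  exact isCutSet_setOf_pow_qb_eq_one ha hap (fun y => mem_zpowers_of_isMaxCyclic hC ha hb) hu hua

lemma mem_zpowers_of_mem_zpowers_mul {a b x : G} (ha : a ^ S.qa = 1)
    (hb : b ^ S.qb = 1) (hap : (orderOf a).Prime) (hx : x ∈ zpowers (a * b))
    (hxb : x ∉ zpowers b) : a ∈ zpowers x := by
  have hxa : x ^ S.ea ∈ zpowers a := mul_pow_ea ha hb ▸ pow_mem_zpowers_pow S.ea hx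
  have hxa1 : x ^ S.ea ≠ 1 := by
    intro h
    apply hxb
    rw [← S.pow_ea_mul_pow_eb x, h, one_mul, ← S.swap.mul_pow_ea hb ha, mul_comm b]
    exact pow_mem_zpowers_pow S.eb hx
  refine zpowers_le.mpr (npow_mem_zpowers x S.ea) ?_
  rw [zpowers_eq_of_mem_of_orderOf_prime hap hxa hxa1]
  exact mem_zpowers a

lemma nonGens_zpowers_mul {a b : G} (ha : a ^ S.qa = 1) (hb : b ^ S.qb = 1)
    (hap : (orderOf a).Prime) (hbp : (orderOf b).Prime) :
    nonGens (zpowers (a * b)) = (zpowers a : Set G) ∪ zpowers b := by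
  refine subset_antisymm (fun x ⟨hx, hxne⟩ => ?_) (Set.union_subset
    (coe_zpowers_subset_nonGens ha hb hbp)
    (mul_comm b a ▸ S.swap.coe_zpowers_subset_nonGens hb ha hap))
  by_contra hxab
  simp only [Set.mem_union, SetLike.mem_coe, not_or] at hxab
  have hax := mem_zpowers_of_mem_zpowers_mul ha hb hap hx hxab.2
  have hbx := S.swap.mem_zpowers_of_mem_zpowers_mul hb ha hbp (mul_comm a b ▸ hx) hxab.1
  exact hxne (le_antisymm (zpowers_le.mpr hx) (zpowers_le.mpr (mul_mem hax hbx)))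

lemma ncard_nonGens_zpowers_mul_add_one {a b : G} (ha : a ^ S.qa = 1) (hb : b ^ S.qb = 1)
    (hap : (orderOf a).Prime) (hbp : (orderOf b).Prime) :
    (nonGens (zpowers (a * b))).ncard + 1 = orderOf a + orderOf b := by
  rw [nonGens_zpowers_mul ha hb hap hbp]
  exact ncard_zpowers_union_add_one (S.disjoint_zpowers ha hb)

variable (S) {X : Set G}

lemma exists_pow_qb_forall_mul_notMem {U : Set G}
    (hX : X.ncard < {g : G | g ^ S.qb = 1}.ncard) (hU : ∀ u ∈ U, u ^ S.qa = 1) :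
    ∃ v, v ^ S.qb = 1 ∧ v ∉ X ∧ ∀ u ∈ U, u * v ∉ X := by
  by_contra! h
  have hcover : {g : G | g ^ S.qb = 1} ⊆ (· ^ S.eb) '' X := by
    intro v (hv : v ^ S.qb = 1)
    by_cases hvX : v ∈ X
    · exact ⟨v, hvX, S.swap.pow_ea_eq_self hv⟩
    · obtain ⟨u, hu, huv⟩ := h v hv hvX
      exact ⟨u * v, huv, mul_comm u v ▸ S.swap.mul_pow_ea hv (hU u hu)⟩
  exact (Set.ncard_le_ncard hcover).trans Set.ncard_image_le |>.not_gt hX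

variable {S}

lemma reachable_of_pow_qa_eq_one
    (hX : X.ncard < {g : G | g ^ S.qb = 1}.ncard) {u u' : G} (hu : u ∈ Xᶜ) (hu' : u' ∈ Xᶜ)
    (hua : u ^ S.qa = 1) (hua' : u' ^ S.qa = 1) :
    ((powerGraph G).induce Xᶜ).Reachable ⟨u, hu⟩ ⟨u', hu'⟩ := by
  obtain ⟨v, hv, hvX, hmul⟩ := S.exists_pow_qb_forall_mul_notMem (U := {u, u'}) hX
    (by rintro w (rfl | rfl) <;> assumption)
  have huv : u * v ∈ Xᶜ := hmul u (by simp)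
  have hu'v : u' * v ∈ Xᶜ := hmul u' (by simp)
  exact (reachable_of_mem_zpowers huv hu (S.mem_zpowers_mul_left hua hv)).symm.trans <|
    (reachable_of_mem_zpowers huv hvX (S.mem_zpowers_mul_right hua hv)).trans <|
    (reachable_of_mem_zpowers hu'v hvX (S.mem_zpowers_mul_right hua' hv)).symm.trans
    (reachable_of_mem_zpowers hu'v hu' (S.mem_zpowers_mul_left hua' hv))

lemma exists_reachable_pow_qb_eq_one
    (hX : X.ncard < {g : G | g ^ S.qb = 1}.ncard) {u : G} (hu : u ∈ Xᶜ) (hua : u ^ S.qa = 1) :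
    ∃ v, ∃ hv : v ∈ Xᶜ, v ^ S.qb = 1 ∧ ((powerGraph G).induce Xᶜ).Reachable ⟨u, hu⟩ ⟨v, hv⟩ := by
  obtain ⟨v, hv, hvX, hmul⟩ := S.exists_pow_qb_forall_mul_notMem (U := {u}) hX (by simpa)
  have huv : u * v ∈ Xᶜ := hmul u rfl
  exact ⟨v, hvX, hv, (reachable_of_mem_zpowers huv hu (S.mem_zpowers_mul_left hua hv)).symm.trans
    (reachable_of_mem_zpowers huv hvX (S.mem_zpowers_mul_right hua hv))⟩

lemma reachable_of_pow_qa_or_pow_qb (hXa : X.ncard < {g : G | g ^ S.qa = 1}.ncard)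
    (hXb : X.ncard < {g : G | g ^ S.qb = 1}.ncard) {u v : G} (hu : u ∈ Xᶜ) (hv : v ∈ Xᶜ)
    (hu' : u ^ S.qa = 1 ∨ u ^ S.qb = 1) (hv' : v ^ S.qa = 1 ∨ v ^ S.qb = 1) :
    ((powerGraph G).induce Xᶜ).Reachable ⟨u, hu⟩ ⟨v, hv⟩ := by
  rcases hu' with hu' | hu' <;> rcases hv' with hv' | hv'
  · exact reachable_of_pow_qa_eq_one hXb hu hv hu' hv'
  · obtain ⟨w, hw, hwb, hr⟩ := exists_reachable_pow_qb_eq_one hXb hu hu'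
    exact hr.trans (S.swap.reachable_of_pow_qa_eq_one hXa hw hv hwb hv')
  · obtain ⟨w, hw, hwa, hr⟩ := S.swap.exists_reachable_pow_qb_eq_one hXa hu hu'
    exact hr.trans (reachable_of_pow_qa_eq_one hXb hw hv hwa hv')
  · exact S.swap.reachable_of_pow_qa_eq_one hXa hu hv hu' hv'

lemma exists_reachable_pow_qa_or_pow_qb {pa pb : ℕ}
    (hpa : ∀ g : G, g ^ S.qa = 1 → g ≠ 1 → pa ≤ orderOf g)
    (hpb : ∀ g : G, g ^ S.qb = 1 → g ≠ 1 → pb ≤ orderOf g)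
    (hX : X.ncard + 1 < pa + pb) {g : G} (hg : g ∈ Xᶜ) :
    ∃ h, ∃ hh : h ∈ Xᶜ, (h ^ S.qa = 1 ∨ h ^ S.qb = 1) ∧
      ((powerGraph G).induce Xᶜ).Reachable ⟨g, hg⟩ ⟨h, hh⟩ := by
  by_cases hgb : g ^ S.qb = 1
  · exact ⟨g, hg, Or.inr hgb, .rfl⟩
  by_cases hga : g ^ S.qa = 1
  · exact ⟨g, hg, Or.inl hga, .rfl⟩
  have hcard : ((zpowers (g ^ S.ea) : Set G) ∪ zpowers (g ^ S.eb)).ncard + 1 =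
      orderOf (g ^ S.ea) + orderOf (g ^ S.eb) :=
    ncard_zpowers_union_add_one
      (S.disjoint_zpowers (S.pow_ea_pow_qa_eq_one g) (S.swap.pow_ea_pow_qa_eq_one g))
  have hlt : X.ncard < ((zpowers (g ^ S.ea) : Set G) ∪ zpowers (g ^ S.eb)).ncard := by
    have := hpa _ (S.pow_ea_pow_qa_eq_one g) (pow_ea_ne_one hgb)
    have : pb ≤ orderOf (g ^ S.eb) :=
      hpb _ (S.swap.pow_ea_pow_qa_eq_one g) (S.swap.pow_ea_ne_one hga)
    omega
  obtain ⟨h, hh, hhX⟩ := Set.exists_mem_notMem_of_ncard_lt_ncard hlt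
  refine ⟨h, hhX, ?_, reachable_of_mem_zpowers hg hhX ?_⟩
  · exact hh.imp (pow_eq_one_of_mem_zpowers (S.pow_ea_pow_qa_eq_one g))
      (pow_eq_one_of_mem_zpowers (S.swap.pow_ea_pow_qa_eq_one g))
  · exact hh.elim (fun h => zpowers_le.mpr (npow_mem_zpowers g _) h)
      (fun h => zpowers_le.mpr (npow_mem_zpowers g _) h)

theorem preconnected_induce_compl {pa pb : ℕ}
    (hpa : ∀ g : G, g ^ S.qa = 1 → g ≠ 1 → pa ≤ orderOf g)
    (hpb : ∀ g : G, g ^ S.qb = 1 → g ≠ 1 → pb ≤ orderOf g)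
    (hXa : X.ncard < {g : G | g ^ S.qa = 1}.ncard) (hXb : X.ncard < {g : G | g ^ S.qb = 1}.ncard)
    (hX : X.ncard + 1 < pa + pb) : ((powerGraph G).induce Xᶜ).Preconnected := by
  intro u v
  obtain ⟨u', hu', hu'p, hru⟩ := exists_reachable_pow_qa_or_pow_qb hpa hpb hX u.2
  obtain ⟨v', hv', hv'p, hrv⟩ := exists_reachable_pow_qa_or_pow_qb hpa hpb hX v.2
  exact hru.trans ((reachable_of_pow_qa_or_pow_qb hXa hXb hu' hv' hu'p hv'p).trans hrv.symm)

theorem kappa_eq_min {a b : G} (ha : a ^ S.qa = 1) (hb : b ^ S.qb = 1)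
    (hap : (orderOf a).Prime) (hbp : (orderOf b).Prime)
    (hmina : ∀ g : G, g ^ S.qa = 1 → g ≠ 1 → orderOf a ≤ orderOf g)
    (hminb : ∀ g : G, g ^ S.qb = 1 → g ≠ 1 → orderOf b ≤ orderOf g)
    (hqa : orderOf a < {g : G | g ^ S.qa = 1}.ncard)
    (hqb : orderOf b < {g : G | g ^ S.qb = 1}.ncard)
    (hC : IsMaxCyclic (zpowers (a * b))) (hCG : zpowers (a * b) ≠ ⊤) :
    kappa G = min (min {g : G | g ^ S.qa = 1}.ncard {g : G | g ^ S.qb = 1}.ncard)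
      (nonGens (zpowers (a * b))).ncard := by
  have hng := S.ncard_nonGens_zpowers_mul_add_one ha hb hap hbp
  refine le_antisymm (le_min (le_min ?_ ?_) (kappa_le_ncard (isCutSet_nonGens hC hCG)))
    (le_kappa (fun X hX => ?_) ?_)
  · exact kappa_le_ncard (S.swap.isCutSet_of_isMaxCyclic (mul_comm a b ▸ hC) hb ha hbp hqb)
  · exact kappa_le_ncard (S.isCutSet_of_isMaxCyclic hC ha hb hap hqa)
  · by_contra! hX'
    exact hX (S.preconnected_induce_compl hmina hminb (by omega) (by omega) (by omega))
  · refine (min_le_right _ _).trans_lt (Set.ncard_lt_card fun h => ?_)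
    exact (h ▸ Set.mem_univ (a * b) : a * b ∈ nonGens _).2 rfl

end TorsionSplitting

theorem statement_2_general {G : Type*} [CommGroup G] [Fintype G] (hnc : ¬ IsCyclic G)
    (p n : Fin 2 → ℕ) (hp : ∀ t, (p t).Prime) (hlt : p 0 < p 1)
    (hcard : Nat.card G = p 0 ^ n 0 * p 1 ^ n 1)
    (P : ∀ t, Sylow (p t) G)
    (hP : ∀ t, ¬ IsCyclic ↥((P t : Subgroup G)))
    (C : Subgroup G) (hC : IsMaxCyclic C) (hCord : Nat.card ↥C = p 0 * p 1) :
    kappa G = min (min (Nat.card ↥((P 0 : Subgroup G))) (Nat.card ↥((P 1 : Subgroup G))))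
      ((nonGens C).ncard) ∧
    (nonGens C).ncard = p 0 + p 1 - 1 := by
  have hcop := (Nat.coprime_primes (hp 0) (hp 1)).mpr hlt.ne
  have hcardP : ∀ t, Nat.card (P t) = p t ^ n t := by
    refine Fin.forall_fin_two.mpr ⟨?_, ?_⟩
    · have := Fact.mk (hp 0)
      exact (P 0).card_eq_pow_of_card_eq_mul hcard
        ((hp 0).coprime_iff_not_dvd.mp (hcop.pow_right _))
    · have := Fact.mk (hp 1)
      exact (P 1).card_eq_pow_of_card_eq_mul (hcard.trans (mul_comm _ _))
        ((hp 1).coprime_iff_not_dvd.mp (hcop.symm.pow_right _))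
  have hncardP (t) : {g : G | g ^ p t ^ n t = 1}.ncard = Nat.card (P t) := by
    have := Fact.mk (hp t)
    rw [← (P t).coe_eq_setOf_pow_eq_one (hcardP t), ← Nat.card_coe_set_eq, SetLike.coe_sort_coe]
    rfl
  have hn (t) : 1 < n t := one_lt_of_card_eq_prime_pow (hp t) (hcardP t) (hP t)
  have hq (t) : p t < {g : G | g ^ p t ^ n t = 1}.ncard := by
    rw [hncardP, hcardP]
    exact lt_self_pow₀ (hp t).one_lt (hn t)
  let S := TorsionSplitting.ofCoprime (hcop.pow (n 0) (n 1)) fun g : G => hcard ▸ pow_card_eq_one'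
  obtain ⟨c, rfl⟩ := hC.1
  have hc : orderOf c = p 0 * p 1 := Nat.card_zpowers c ▸ hCord
  have ha : orderOf (c ^ S.ea) = p 0 :=
    S.orderOf_pow_ea hc (dvd_pow_self _ (hn 0).ne_bot) (dvd_pow_self _ (hn 1).ne_bot)
  have hb : orderOf (c ^ S.eb) = p 1 := S.swap.orderOf_pow_ea (hc.trans (mul_comm _ _))
    (dvd_pow_self _ (hn 1).ne_bot) (dvd_pow_self _ (hn 0).ne_bot)
  rw [← S.pow_ea_mul_pow_eb c] at hC ⊢
  have hng : (nonGens (zpowers (c ^ S.ea * c ^ S.eb))).ncard + 1 = p 0 + p 1 := ha ▸ hb ▸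
    S.ncard_nonGens_zpowers_mul_add_one (S.pow_ea_pow_qa_eq_one c) (S.swap.pow_ea_pow_qa_eq_one c)
      (ha ▸ hp 0) (hb ▸ hp 1)
  refine ⟨?_, by omega⟩
  rw [← hncardP 0, ← hncardP 1]
  exact S.kappa_eq_min (S.pow_ea_pow_qa_eq_one c) (S.swap.pow_ea_pow_qa_eq_one c)
    (ha ▸ hp 0) (hb ▸ hp 1)
    (fun g => ha ▸ le_orderOf_of_pow_prime_pow_eq_one (hp 0))
    (fun g => hb ▸ le_orderOf_of_pow_prime_pow_eq_one (hp 1)) (ha ▸ hq 0) (hb ▸ hq 1) hC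
    fun h => hnc (isCyclic_iff_exists_zpowers_eq_top.mpr ⟨_, h⟩)

/-- Theorem 1.2(ii) (main-2(ii)): `G` finite non-cyclic abelian of order `p₀^{n₀} p₁^{n₁}` with
both Sylow subgroups non-cyclic, `p₀ ≥ 3`, and `C` a maximal cyclic subgroup of order `p₀ p₁`;
then `κ(P(G)) = min {|P₀|, |P₁|, |C̃|}` where `|C̃| = p₀ + p₁ - 1`. -/
theorem statement_2 {G : Type*} [CommGroup G] [Fintype G] (hnc : ¬ IsCyclic G)
    (p n : Fin 2 → ℕ) (hp : ∀ t, (p t).Prime) (hlt : p 0 < p 1) (hn : ∀ t, 1 ≤ n t)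
    (h3 : 3 ≤ p 0)
    (hcard : Nat.card G = p 0 ^ n 0 * p 1 ^ n 1)
    (P : ∀ t, Sylow (p t) G)
    (hP : ∀ t, ¬ IsCyclic ↥((P t : Subgroup G)))
    (C : Subgroup G) (hC : IsMaxCyclic C) (hCord : Nat.card ↥C = p 0 * p 1) :
    kappa G = min (min (Nat.card ↥((P 0 : Subgroup G))) (Nat.card ↥((P 1 : Subgroup G))))
      ((nonGens C).ncard) ∧
    (nonGens C).ncard = p 0 + p 1 - 1 :=
  statement_2_general hnc p n hp hlt hcard P hP C hC hCord
end

section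
/- Let G be a finite non-cyclic abelian group of order p1^{n1} p2^{n2} p3^{n3}, where 3 ≤ p1 < p2 < p3 are primes and n1, n2, n3 ≥ 1, and let P1, P2, P3 be the Sylow subgroups of G corresponding to p1, p2, p3. Suppose exactly one Sylow subgroup Pk of G is non-cyclic, and let i, j be such that {i,j,k} = {1,2,3}. Then PiPj (the subgroup generated by Pi and Pj) is the unique minimum cut-set of P(G), and κ(P(G)) = |PiPj| = pi^{ni} pj^{nj}. -/
open Subgroup Finset

lemma SimpleGraph.Reachable.eq_of_forall_adj {V β : Type*} {Γ : SimpleGraph V} (f : V → β)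
    (hf : ∀ u v, Γ.Adj u v → f u = f v) {u v : V} (h : Γ.Reachable u v) : f u = f v := by
  obtain ⟨w⟩ := h
  induction w with
  | nil => rfl
  | cons ha _ ih => exact (hf _ _ ha).trans ih

section PowerGraph

variable {G : Type*} [Group G]

lemma reachable_of_mem_zpowers_s6 {Y : Set G} {u v : ↥Yᶜ} (h : (u : G) ∈ zpowers (v : G)) :
    ((powerGraph G).induce Yᶜ).Reachable u v := by
  by_cases huv : u = v
  · rw [huv]
  · exact SimpleGraph.Adj.reachable ⟨fun h' => huv (Subtype.ext h'), Or.inl h⟩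

lemma not_isCutSet_of_forall_reachable {Y : Set G} (v : ↥Yᶜ)
    (h : ∀ u, ((powerGraph G).induce Yᶜ).Reachable u v) : ¬ IsCutSet Y :=
  fun hY => hY fun u w => (h u).trans (h w).symm

lemma IsCutSet.nonempty_compl {X : Set G} (hX : IsCutSet X) : Xᶜ.Nonempty := by
  by_contra h
  exact hX fun u => (h ⟨u, u.2⟩).elim

lemma kappa_eq_ncard [Finite G] {X : Set G} (hX : IsMinimumCutSet X) : kappa G = X.ncard := by
  have hmem : X.ncard ∈ {m | ∃ X : Set G, X.ncard = m ∧ (IsCutSet X ∨ Xᶜ.ncard = 1)} :=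
    ⟨X, rfl, Or.inl hX.1⟩
  refine le_antisymm (Nat.sInf_le hmem) (le_csInf ⟨_, hmem⟩ ?_)
  rintro _ ⟨Y, rfl, hY | hY⟩
  · exact hX.2 Y hY
  · have hXc := (Set.ncard_pos (Set.toFinite _)).2 hX.1.nonempty_compl
    have := Set.ncard_add_ncard_compl X
    have := Set.ncard_add_ncard_compl Y
    omega

end PowerGraph

section Cyclic

variable {G : Type*} [Group G] [Finite G]

lemma mem_zpowers_pow_orderOf_div {g x : G} (hx : x ∈ zpowers g) :
    x ∈ zpowers (g ^ (orderOf g / orderOf x)) := by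
  obtain ⟨s, rfl⟩ : ∃ s : ℕ, g ^ s = x :=
    Submonoid.mem_powers_iff _ _ |>.1 ((isOfFinOrder_of_finite g).mem_powers_iff_mem_zpowers.2 hx)
  have hd : orderOf (g ^ s) ∣ orderOf g := orderOf_dvd_of_mem_zpowers hx
  have hdvd : orderOf g / orderOf (g ^ s) ∣ s := by
    refine Nat.dvd_of_mul_dvd_mul_right (orderOf_pos (g ^ s)) ?_
    rw [Nat.div_mul_cancel hd]
    exact orderOf_dvd_of_pow_eq_one (by rw [pow_mul, pow_orderOf_eq_one])
  obtain ⟨r, hr⟩ := hdvd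
  convert pow_mem (mem_zpowers (g ^ (orderOf g / orderOf (g ^ s)))) r using 1
  rw [← pow_mul, ← hr]

lemma zpowers_eq_zpowers_pow_orderOf_div {g x : G} (hx : x ∈ zpowers g) :
    zpowers x = zpowers (g ^ (orderOf g / orderOf x)) := by
  refine eq_of_le_of_card_ge (zpowers_le.2 (mem_zpowers_pow_orderOf_div hx)) ?_
  rw [Nat.card_zpowers, Nat.card_zpowers,
    orderOf_pow_orderOf_div (orderOf_pos g).ne' (orderOf_dvd_of_mem_zpowers hx)]

lemma zpowers_eq_of_orderOf_eq {g x y : G} (hx : x ∈ zpowers g) (hy : y ∈ zpowers g)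
    (h : orderOf x = orderOf y) : zpowers x = zpowers y := by
  rw [zpowers_eq_zpowers_pow_orderOf_div hx, zpowers_eq_zpowers_pow_orderOf_div hy, h]

lemma zpowers_pow_orderOf_div_eq {q : ℕ} {u v : G} (hq : q ∣ orderOf u) (huv : u ∈ zpowers v) :
    zpowers (u ^ (orderOf u / q)) = zpowers (v ^ (orderOf v / q)) := by
  have hqv : q ∣ orderOf v := hq.trans (orderOf_dvd_of_mem_zpowers huv)
  refine zpowers_eq_of_orderOf_eq (g := v) (zpowers_le.2 huv (pow_mem (mem_zpowers u) _))
    (pow_mem (mem_zpowers v) _) ?_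
  rw [orderOf_pow_orderOf_div (orderOf_pos u).ne' hq,
    orderOf_pow_orderOf_div (orderOf_pos v).ne' hqv]

lemma ncard_setOf_zpowers_eq (C : Subgroup G) [IsCyclic C] :
    {c : G | zpowers c = C}.ncard = (Nat.card C).totient := by
  classical
  have hset : {c : G | zpowers c = C} = Subtype.val '' {c : C | orderOf c = Nat.card C} := by
    ext c
    refine ⟨fun hc => ⟨⟨c, hc ▸ mem_zpowers c⟩, ?_, rfl⟩, ?_⟩
    · show orderOf _ = _
      rw [orderOf_mk, ← Nat.card_zpowers, hc]
    · rintro ⟨c, hc, rfl⟩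
      refine eq_of_le_of_card_ge (zpowers_le.2 c.2) ?_
      rw [Nat.card_zpowers, orderOf_coe, hc]
  have := Fintype.ofFinite C
  rw [hset, Set.ncard_image_of_injective _ Subtype.val_injective, Set.ncard_eq_toFinset_card',
    Set.toFinset_ofPred, Nat.card_eq_fintype_card, IsCyclic.card_orderOf_eq_totient dvd_rfl]

/-- The subgroup of order `q` of `⟨u⟩` is constant along the edges outside `X`. -/
theorem isCutSet_of_dvd_orderOf {X : Set G} {q : ℕ} (hX : ∀ u ∉ X, q ∣ orderOf u) {a b : G}
    (ha : a ∉ X) (hb : b ∉ X) (hoa : orderOf a = q) (hob : orderOf b = q)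
    (hab : zpowers a ≠ zpowers b) : IsCutSet X := by
  intro hconn
  let σ : ↥Xᶜ → Subgroup G := fun u => zpowers ((u : G) ^ (orderOf (u : G) / q))
  have hσ : ∀ u v, ((powerGraph G).induce Xᶜ).Adj u v → σ u = σ v := by
    rintro u v ⟨-, huv | hvu⟩
    · exact zpowers_pow_orderOf_div_eq (hX u u.2) huv
    · exact (zpowers_pow_orderOf_div_eq (hX v v.2) hvu).symm
  have hq : 0 < q := hoa ▸ orderOf_pos a
  have := (hconn ⟨a, ha⟩ ⟨b, hb⟩).eq_of_forall_adj σ hσ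
  simp only [σ, hoa, hob, Nat.div_self hq, pow_one] at this
  exact hab this

end Cyclic

lemma Subgroup.mem_of_coprime_index {G : Type*} [Group G] {H : Subgroup G} [H.Normal] {x : G}
    (h : (orderOf x).Coprime H.index) : x ∈ H :=
  zpowers_le.2 (H.pow_index_mem x) (mem_zpowers_pow_iff.2 (Nat.coprime_comm.1 h))

section Coprime

variable {G : Type*} [CommGroup G]

lemma mem_zpowers_mul_of_coprime {x y : G} (h : (orderOf x).Coprime (orderOf y)) :
    x ∈ zpowers (x * y) := by
  have hpow : (x * y) ^ orderOf y = x ^ orderOf y := by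
    rw [mul_pow, pow_orderOf_eq_one, mul_one]
  exact zpowers_le.2 (hpow ▸ pow_mem (mem_zpowers _) _) (mem_zpowers_pow_iff.2 h.symm)

lemma zpowers_mul_eq_sup_of_coprime {x y : G} (h : (orderOf x).Coprime (orderOf y)) :
    zpowers (x * y) = zpowers x ⊔ zpowers y := by
  refine le_antisymm (zpowers_le.2 (mul_mem_sup (mem_zpowers x) (mem_zpowers y)))
    (sup_le (zpowers_le.2 (mem_zpowers_mul_of_coprime h)) (zpowers_le.2 ?_))
  rw [mul_comm]
  exact mem_zpowers_mul_of_coprime h.symm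

lemma exists_zpowers_eq_sup_of_coprime {H₁ H₂ : Subgroup G} [IsCyclic H₁] [IsCyclic H₂]
    (h : (Nat.card H₁).Coprime (Nat.card H₂)) :
    ∃ g : G, zpowers g = H₁ ⊔ H₂ ∧ orderOf g = Nat.card H₁ * Nat.card H₂ := by
  obtain ⟨x, rfl⟩ := H₁.isCyclic_iff_exists_zpowers_eq_top.1 ‹_›
  obtain ⟨y, rfl⟩ := H₂.isCyclic_iff_exists_zpowers_eq_top.1 ‹_›
  rw [Nat.card_zpowers, Nat.card_zpowers] at h ⊢
  exact ⟨x * y, zpowers_mul_eq_sup_of_coprime h,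
    (Commute.all x y).orderOf_mul_eq_mul_orderOf_of_coprime h⟩

end Coprime

section PGroup

variable {H : Type*} [CommGroup H] [Fintype H] [DecidableEq H]

lemma card_filter_pow_eq_le (n : ℕ) (b : H) : #{a | a ^ n = b} ≤ #{a : H | a ^ n = 1} := by
  obtain ⟨x, hx⟩ | hb := (filter (fun a : H => a ^ n = b) univ).eq_empty_or_nonempty.symm
  · refine card_le_card_of_injOn (· * x⁻¹) (fun a ha => ?_) (fun a _ c _ h => mul_right_cancel h)
    simp only [coe_filter, mem_filter, mem_univ, true_and, Set.mem_ofPred_eq] at ha hx ⊢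
    rw [mul_pow, ha, inv_pow, hx, mul_inv_cancel]
  · simp [hb]

lemma card_filter_pow_prime_pow_eq_one_le {q : ℕ} (h : #{a : H | a ^ q = 1} ≤ q) (v : ℕ) :
    #{a : H | a ^ q ^ v = 1} ≤ q ^ v := by
  induction v with
  | zero => simpa using card_le_one.2 fun a ha b hb => by simp_all
  | succ v ih =>
    have hmaps : ∀ a ∈ ({a | a ^ q ^ (v + 1) = 1} : Finset H),
        a ^ q ∈ ({a | a ^ q ^ v = 1} : Finset H) := by
      simp [← pow_mul, ← pow_succ']
    have hfibre : ∀ b ∈ ({a | a ^ q ^ v = 1} : Finset H),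
        #{a ∈ ({a | a ^ q ^ (v + 1) = 1} : Finset H) | a ^ q = b} ≤ q := fun b _ =>
      ((card_le_card (filter_subset_filter _ (subset_univ _))).trans
        (card_filter_pow_eq_le q b)).trans h
    calc _ ≤ q * #{a : H | a ^ q ^ v = 1} := card_le_mul_card_image_of_maps_to hmaps q hfibre
      _ ≤ q * q ^ v := Nat.mul_le_mul_left q ih
      _ = q ^ (v + 1) := (pow_succ' q v).symm

end PGroup

/-- With a unique subgroup of order `q`, the equation `x ^ q = 1` has at most `q` solutions, hence
`x ^ n = 1` has at most `n`. -/
theorem IsPGroup.isCyclic_of_zpowers_eq {H : Type*} [CommGroup H] [Finite H] {q : ℕ}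
    [hq : Fact q.Prime] (hH : IsPGroup q H)
    (h : ∀ a b : H, orderOf a = q → orderOf b = q → zpowers a = zpowers b) : IsCyclic H := by
  classical
  have := Fintype.ofFinite H
  have hE : #{a : H | a ^ q = 1} ≤ q := by
    by_cases ha : ∃ a : H, orderOf a = q
    · obtain ⟨a, ha⟩ := ha
      calc #{x : H | x ^ q = 1} ≤ #(zpowers a : Set H).toFinset := card_le_card fun x hx => by
            simp only [mem_filter, mem_univ, true_and] at hx
            rw [Set.mem_toFinset, SetLike.mem_coe]
            by_cases hx1 : x = 1
            · exact hx1 ▸ one_mem _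
            · exact h x a (orderOf_eq_prime hx hx1) ha ▸ mem_zpowers x
        _ = q := by
          rw [Set.toFinset_card, ← Nat.card_eq_fintype_card]
          exact (Nat.card_zpowers a).trans ha
    · simp only [not_exists] at ha
      calc #{x : H | x ^ q = 1} ≤ #{(1 : H)} := card_le_card fun x hx => by
            simp only [mem_filter, mem_univ, true_and] at hx
            by_contra hx1
            exact ha x (orderOf_eq_prime hx (by simpa using hx1))
        _ ≤ q := by simpa using hq.out.one_lt.le
  refine isCyclic_of_card_pow_eq_one_le fun n hn => ?_
  have hpow : ∀ x : H, x ^ n = 1 ↔ x ^ q ^ n.factorization q = 1 := fun x => by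
    obtain ⟨k, hk⟩ := (IsPGroup.iff_orderOf.1 hH) x
    rw [← orderOf_dvd_iff_pow_eq_one, ← orderOf_dvd_iff_pow_eq_one, hk,
      hq.out.pow_dvd_iff_le_factorization hn.ne', Nat.pow_dvd_pow_iff_le_right hq.out.one_lt]
  rw [filter_congr fun x _ => hpow x]
  exact (card_filter_pow_prime_pow_eq_one_le hE _).trans (Nat.ordProj_le q hn.ne')

theorem IsPGroup.exists_zpowers_ne_of_not_isCyclic {G : Type*} [CommGroup G] [Finite G] {q : ℕ}
    [Fact q.Prime] {K : Subgroup G} (hK : IsPGroup q K) (hKnc : ¬ IsCyclic K) :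
    ∃ a ∈ K, ∃ b ∈ K, orderOf a = q ∧ orderOf b = q ∧ zpowers a ≠ zpowers b := by
  by_contra! h
  refine hKnc (hK.isCyclic_of_zpowers_eq fun a b ha hb => map_injective K.subtype_injective ?_)
  rw [MonoidHom.map_zpowers, MonoidHom.map_zpowers]
  exact h a a.2 b b.2 (by simpa using ha) (by simpa using hb)

lemma Subgroup.inv_ne_self_of_odd_card {G : Type*} [Group G] {H : Subgroup G}
    (hH : Odd (Nat.card H)) {b : G} (hb : b ∈ H) (hb1 : b ≠ 1) : b⁻¹ ≠ b := by
  intro h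
  have h2 : orderOf b ∣ 2 := orderOf_dvd_of_pow_eq_one <| by
    rw [sq]
    nth_rewrite 1 [← h]
    exact inv_mul_cancel b
  exact hb1 (orderOf_eq_one_iff.1 (((Nat.coprime_two_left.2 hH).coprime_dvd_left h2).eq_one_of_dvd
    (H.orderOf_dvd_natCard hb)))

section Complement

variable {G : Type*} [CommGroup G] (C : Subgroup G) {K : Subgroup G}

/-- `T_b`: the elements whose `C`-component generates `C` and whose `K`-component is `b`. -/
def translatedGenerators (b : G) : Set G := (· * b) '' {c | zpowers c = C}

lemma ncard_translatedGenerators [Finite G] [IsCyclic C] (b : G) :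
    (translatedGenerators C b).ncard = (Nat.card C).totient := by
  rw [translatedGenerators, Set.ncard_image_of_injective _ (mul_left_injective b),
    ncard_setOf_zpowers_eq]

lemma disjoint_translatedGenerators (hCK : Disjoint C K) {b b' : G} (hb : b ∈ K) (hb' : b' ∈ K)
    (hne : b ≠ b') : Disjoint (translatedGenerators C b) (translatedGenerators C b') := by
  refine Set.disjoint_left.2 ?_
  rintro _ ⟨c, hc, rfl⟩ ⟨c', hc', he⟩
  simp only at he
  have hdiv : b' * b⁻¹ = c * c'⁻¹ := by
    rw [mul_inv_eq_iff_eq_mul, mul_right_comm, ← he, mul_inv_cancel_comm]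
  have hC : b' * b⁻¹ ∈ C := hdiv ▸ mul_mem (hc ▸ mem_zpowers c) (inv_mem (hc' ▸ mem_zpowers c'))
  exact hne (mul_inv_eq_one.1 (disjoint_def.1 hCK hC (mul_mem hb' (inv_mem hb)))).symm

lemma mul_mem_zpowers_of_mem_translatedGenerators (hcop : (Nat.card C).Coprime (Nat.card K))
    {b t : G} (hb : b ∈ K) (ht : t ∈ translatedGenerators C b) {c k : G} (hc : c ∈ C)
    (hk : k ∈ zpowers b) : c * k ∈ zpowers t := by
  obtain ⟨c₀, hc₀, rfl⟩ := ht
  have hcop' : (orderOf c₀).Coprime (orderOf b) := by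
    rw [← Nat.card_zpowers c₀, hc₀]
    exact hcop.coprime_dvd_right (K.orderOf_dvd_natCard hb)
  rw [zpowers_mul_eq_sup_of_coprime hcop', hc₀]
  exact mul_mem_sup hc hk

lemma not_subset_or_not_subset_translatedGenerators [Finite G] [IsCyclic C] (hCK : Disjoint C K)
    {Y : Set G} (hY : Y.ncard < 2 * (Nat.card C).totient) {b b' : G} (hb : b ∈ K) (hb' : b' ∈ K)
    (hne : b ≠ b') : ¬ translatedGenerators C b ⊆ Y ∨ ¬ translatedGenerators C b' ⊆ Y := by
  by_contra! h
  have hle := Set.ncard_le_ncard (Set.union_subset h.1 h.2) (Set.toFinite Y)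
  rw [Set.ncard_union_eq (disjoint_translatedGenerators C hCK hb hb' hne),
    ncard_translatedGenerators, ncard_translatedGenerators] at hle
  omega

/-- A vertex `c * k ∉ Y` and `h` are both powers of any `t ∈ T_b \ Y`, hence joined outside `Y`. -/
lemma not_isCutSet_of_forall_exists (hcop : (Nat.card C).Coprime (Nat.card K)) (hsup : C ⊔ K = ⊤)
    {Y : Set G} {h : G} (hC : h ∈ C) (hY : h ∉ Y)
    (H : ∀ k ∈ K, ∃ b ∈ K, k ∈ zpowers b ∧ ¬ translatedGenerators C b ⊆ Y) : ¬ IsCutSet Y := by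
  refine not_isCutSet_of_forall_reachable ⟨h, hY⟩ fun ⟨g, hg⟩ => ?_
  obtain ⟨c, hc, k, hk, rfl⟩ := mem_sup.1 (hsup ▸ mem_top g : g ∈ C ⊔ K)
  obtain ⟨b, hb, hkb, hbY⟩ := H k hk
  obtain ⟨t, ht, htY⟩ := Set.not_subset.1 hbY
  have hgt := mul_mem_zpowers_of_mem_translatedGenerators C hcop hb ht hc hkb
  have hht := mul_mem_zpowers_of_mem_translatedGenerators C hcop hb ht hC (one_mem _)
  rw [mul_one] at hht
  exact (reachable_of_mem_zpowers_s6 (v := ⟨t, htY⟩) hgt).trans (reachable_of_mem_zpowers_s6 hht).symm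

theorem eq_of_isCutSet_of_ncard_le [Finite G] [IsCyclic C] (hCK : IsComplement' C K)
    (hcop : (Nat.card C).Coprime (Nat.card K)) (hodd : Odd (Nat.card K)) (hK : K ≠ ⊥)
    (htot : Nat.card C < 2 * (Nat.card C).totient) {Y : Set G} (hYcut : IsCutSet Y)
    (hY : Y.ncard ≤ Nat.card C) : Y = C := by
  have pigeon := fun {b b'} => not_subset_or_not_subset_translatedGenerators C hCK.disjoint
    (Y := Y) (by omega) (b := b) (b' := b')
  by_cases hgen : ∃ h, zpowers h = C ∧ h ∉ Y
  · obtain ⟨h, hh, hhY⟩ := hgen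
    refine (not_isCutSet_of_forall_exists C hcop hCK.sup_eq_top (hh ▸ mem_zpowers h) hhY
      (fun k hk => ?_) hYcut).elim
    by_cases hk1 : k = 1
    · exact ⟨1, one_mem _, by simp [hk1], fun hsub => hhY (hsub ⟨h, hh, mul_one h⟩)⟩
    · rcases pigeon hk (inv_mem hk) (inv_ne_self_of_odd_card hodd hk hk1).symm with hT | hT
      · exact ⟨k, hk, mem_zpowers k, hT⟩
      · exact ⟨k⁻¹, inv_mem hk, by simp, hT⟩
  · simp only [not_exists, not_and, not_not] at hgen
    have hT1 : translatedGenerators C 1 ⊆ Y := by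
      rintro _ ⟨c, hc, rfl⟩
      simpa using hgen c hc
    have hCY : (C : Set G) ⊆ Y := by
      intro c₀ hc₀
      by_contra hc₀Y
      obtain ⟨⟨b₁, hb₁⟩, hb₁1⟩ := ne_bot_iff_exists_ne_one.1 hK
      refine not_isCutSet_of_forall_exists C hcop hCK.sup_eq_top hc₀ hc₀Y (fun k hk => ?_) hYcut
      obtain ⟨b, hb, hkb, hb1⟩ : ∃ b ∈ K, k ∈ zpowers b ∧ b ≠ 1 := by
        by_cases hk1 : k = 1
        · exact ⟨b₁, hb₁, by simp [hk1], fun h => hb₁1 (Subtype.ext h)⟩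
        · exact ⟨k, hk, mem_zpowers k, hk1⟩
      exact ⟨b, hb, hkb, (pigeon (one_mem K) hb (Ne.symm hb1)).resolve_left (not_not.2 hT1)⟩
    exact (Set.eq_of_subset_of_ncard_le hCY (by rwa [← Nat.card_coe_set_eq]) (Set.toFinite _)).symm

theorem isCutSet_of_isComplement' [Finite G] {q : ℕ} [hq : Fact q.Prime] (hCK : IsComplement' C K)
    (hK : IsPGroup q K) (hKnc : ¬ IsCyclic K) : IsCutSet (C : Set G) := by
  obtain ⟨m, hm⟩ := IsPGroup.iff_card.1 hK
  have hdvd : ∀ u ∉ (C : Set G), q ∣ orderOf u := fun u hu => by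
    by_contra hqu
    refine hu (mem_of_coprime_index ?_)
    rw [hCK.symm.index_eq_card, hm]
    exact (Nat.coprime_comm.1 ((hq.out.coprime_iff_not_dvd).2 hqu)).pow_right m
  have hnotC : ∀ a ∈ K, orderOf a = q → a ∉ (C : Set G) := fun a haK ha haC =>
    hq.out.one_lt.ne' (ha ▸ orderOf_eq_one_iff.2 (disjoint_def.1 hCK.disjoint haC haK))
  obtain ⟨a, haK, b, hbK, ha, hb, hab⟩ := hK.exists_zpowers_ne_of_not_isCyclic hKnc
  exact isCutSet_of_dvd_orderOf hdvd (hnotC a haK ha) (hnotC b hbK hb) ha hb hab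

theorem isMinimumCutSet_of_isComplement' [Finite G] {q : ℕ} [hq : Fact q.Prime] (hq2 : q ≠ 2)
    [IsCyclic C] (hCK : IsComplement' C K) (hcop : (Nat.card C).Coprime (Nat.card K))
    (hK : IsPGroup q K) (hKnc : ¬ IsCyclic K) (htot : Nat.card C < 2 * (Nat.card C).totient) :
    IsMinimumCutSet (C : Set G) ∧ ∀ X : Set G, IsMinimumCutSet X → X = C := by
  have hcut := isCutSet_of_isComplement' C hCK hK hKnc
  have hodd : Odd (Nat.card K) := by
    obtain ⟨m, hm⟩ := IsPGroup.iff_card.1 hK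
    exact hm ▸ (hq.out.odd_of_ne_two hq2).pow
  have hbot : K ≠ ⊥ := fun h => hKnc (h ▸ isCyclic_of_subsingleton)
  have hC : (C : Set G).ncard = Nat.card C := (Nat.card_coe_set_eq _).symm
  have hsmall : ∀ Y, IsCutSet Y → Y.ncard ≤ Nat.card C → Y = C := fun Y hY hle =>
    eq_of_isCutSet_of_ncard_le C hCK hcop hodd hbot htot hY hle
  refine ⟨⟨hcut, fun Y hY => ?_⟩, fun X hX => hsmall X hX.1 (hC ▸ hX.2 _ hcut)⟩
  by_contra! hlt
  rw [hC] at hlt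
  rw [hsmall Y hY hlt.le, hC] at hlt
  exact lt_irrefl _ hlt

end Complement

lemma pred_mul_pow_le_mul_totient {p : ℕ} (hp : p.Prime) (a : ℕ) :
    (p - 1) * p ^ a ≤ p * (p ^ a).totient := by
  rcases Nat.eq_zero_or_pos a with rfl | ha
  · simp
  · rw [Nat.totient_prime_pow hp ha]
    obtain ⟨b, rfl⟩ : ∃ b, a = b + 1 := ⟨a - 1, by omega⟩
    exact le_of_eq (by rw [Nat.add_sub_cancel, pow_succ]; ring)

lemma lt_two_mul_totient_prime_pow_mul {p r : ℕ} (hp : p.Prime) (hr : r.Prime) (hp3 : 3 ≤ p)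
    (hr3 : 3 ≤ r) (hpr : p ≠ r) (a b : ℕ) : p ^ a * r ^ b < 2 * (p ^ a * r ^ b).totient := by
  have h5 : 5 ≤ p ∨ 5 ≤ r := by
    by_contra! h
    obtain ⟨hp5, hr5⟩ := h
    interval_cases p <;> interval_cases r <;> norm_num at *
  have hcore : p * r < 2 * ((p - 1) * (r - 1)) := by
    obtain ⟨p', rfl⟩ : ∃ p', p = p' + 1 := ⟨p - 1, by omega⟩
    obtain ⟨r', rfl⟩ : ∃ r', r = r' + 1 := ⟨r - 1, by omega⟩
    simp only [Nat.add_sub_cancel]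
    rcases h5 with h5 | h5 <;> nlinarith
  rw [Nat.totient_mul (Nat.coprime_pow_primes a b hp hr hpr)]
  have hx := pred_mul_pow_le_mul_totient hp a
  have hy := pred_mul_pow_le_mul_totient hr b
  have hpos : 0 < p ^ a * r ^ b := by positivity
  by_contra! hle
  have h1 := Nat.mul_le_mul hx hy
  have h2 := Nat.mul_lt_mul_of_pos_right hcore hpos
  have h3 := Nat.mul_le_mul_left (p * r) hle
  nlinarith

lemma factorization_prod_pow_apply {ι : Type*} [Fintype ι] {p n : ι → ℕ} (hp : ∀ t, (p t).Prime)
    (hinj : Function.Injective p) (s : ι) : (∏ t, p t ^ n t).factorization (p s) = n s := by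
  rw [Nat.factorization_prod fun t _ => pow_ne_zero _ (hp t).ne_zero, Finsupp.finsetSum_apply,
    Finset.sum_eq_single s (fun t _ hts => by simp [(hp t).factorization_pow, hinj.ne hts])
      (by simp), (hp s).factorization_pow, Finsupp.single_eq_same]

lemma Fin.mul_three_eq_of_ne {M : Type*} [CommMonoid M] (f : Fin 3 → M) {i j k : Fin 3}
    (hij : i ≠ j) (hik : i ≠ k) (hjk : j ≠ k) : f 0 * f 1 * f 2 = f i * f j * f k := by
  fin_cases i <;> fin_cases j <;> fin_cases k <;> simp_all <;> grind

theorem statement_6_general {G : Type*} [CommGroup G]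
    (p n : Fin 3 → ℕ) (hp : ∀ t, (p t).Prime) (hmono : StrictMono p)
    (hp0 : 3 ≤ p 0)
    (hcard : Nat.card G = p 0 ^ n 0 * p 1 ^ n 1 * p 2 ^ n 2)
    (P : ∀ t, Sylow (p t) G)
    (i j k : Fin 3) (hij : i ≠ j) (hik : i ≠ k) (hjk : j ≠ k)
    (hknc : ¬ IsCyclic ↥((P k : Subgroup G)))
    (hcyc : ∀ t, t ≠ k → IsCyclic ↥((P t : Subgroup G))) :
    IsMinimumCutSet ((((P i : Subgroup G) ⊔ (P j : Subgroup G)) : Subgroup G) : Set G) ∧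
    (∀ X : Set G, IsMinimumCutSet X →
      X = ((((P i : Subgroup G) ⊔ (P j : Subgroup G)) : Subgroup G) : Set G)) ∧
    kappa G = p i ^ n i * p j ^ n j ∧
    Nat.card ↥((P i : Subgroup G) ⊔ (P j : Subgroup G)) = p i ^ n i * p j ^ n j := by
  have : ∀ t, Fact (p t).Prime := fun t => ⟨hp t⟩
  have hcard' : Nat.card G = ∏ t, p t ^ n t := by rw [hcard, Fin.prod_univ_three]
  have : Finite G := Nat.finite_of_card_ne_zero <| by
    simp [hcard', Finset.prod_eq_zero_iff, (hp _).ne_zero]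
  have hP : ∀ t, Nat.card (P t) = p t ^ n t := fun t => by
    rw [Sylow.card_eq_multiplicity, hcard', factorization_prod_pow_apply hp hmono.injective]
  have hcopP : ∀ {s t}, s ≠ t → (p s ^ n s).Coprime (p t ^ n t) := fun h =>
    Nat.coprime_pow_primes _ _ (hp _) (hp _) (hmono.injective.ne h)
  have hp3 : ∀ t, 3 ≤ p t := fun t => hp0.trans (hmono.monotone (Fin.zero_le t))
  have := hcyc i hik
  have := hcyc j hjk
  obtain ⟨g, hg, hog⟩ :=
    exists_zpowers_eq_sup_of_coprime (H₁ := (P i : Subgroup G)) (H₂ := (P j : Subgroup G))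
    (by rw [hP, hP]; exact hcopP hij)
  have hC : Nat.card (zpowers g) = p i ^ n i * p j ^ n j := by rw [Nat.card_zpowers, hog, hP, hP]
  have hcop : (Nat.card (zpowers g)).Coprime (Nat.card (P k)) := by
    rw [hC, hP]
    exact (hcopP hik).mul_left (hcopP hjk)
  have hCK : IsComplement' (zpowers g) (P k) := isComplement'_of_coprime
    (by rw [hC, hP, hcard, Fin.mul_three_eq_of_ne (fun t => p t ^ n t) hij hik hjk]) hcop
  have htot := lt_two_mul_totient_prime_pow_mul (hp i) (hp j) (hp3 i) (hp3 j)
    (hmono.injective.ne hij) (n i) (n j)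
  obtain ⟨hmin, huniq⟩ := isMinimumCutSet_of_isComplement' _ (by have := hp3 k; omega) hCK hcop
    (P k).isPGroup' hknc (hC ▸ htot)
  rw [← hg]
  exact ⟨hmin, huniq, by rw [kappa_eq_ncard hmin, ← Nat.card_coe_set_eq]; exact hC, hC⟩

/-- Theorem 1.3(iii) (main-3(iii)): `G` finite non-cyclic abelian of order
`p₀^{n₀} p₁^{n₁} p₂^{n₂}` with `3 ≤ p₀ < p₁ < p₂`, where exactly the Sylow subgroup `P k`
is non-cyclic; then `P i ⊔ P j` (`{i,j,k} = {0,1,2}`) is the unique minimum cut-set of the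
power graph and `κ(P(G)) = p_i^{n_i} p_j^{n_j}`. -/
theorem statement_6 {G : Type*} [CommGroup G] [Fintype G] (hnc : ¬ IsCyclic G)
    (p n : Fin 3 → ℕ) (hp : ∀ t, (p t).Prime) (hmono : StrictMono p)
    (hp0 : 3 ≤ p 0) (hn : ∀ t, 1 ≤ n t)
    (hcard : Nat.card G = p 0 ^ n 0 * p 1 ^ n 1 * p 2 ^ n 2)
    (P : ∀ t, Sylow (p t) G)
    (i j k : Fin 3) (hij : i ≠ j) (hik : i ≠ k) (hjk : j ≠ k)
    (hknc : ¬ IsCyclic ↥((P k : Subgroup G)))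
    (hcyc : ∀ t, t ≠ k → IsCyclic ↥((P t : Subgroup G))) :
    IsMinimumCutSet ((((P i : Subgroup G) ⊔ (P j : Subgroup G)) : Subgroup G) : Set G) ∧
    (∀ X : Set G, IsMinimumCutSet X →
      X = ((((P i : Subgroup G) ⊔ (P j : Subgroup G)) : Subgroup G) : Set G)) ∧
    kappa G = p i ^ n i * p j ^ n j ∧
    Nat.card ↥((P i : Subgroup G) ⊔ (P j : Subgroup G)) = p i ^ n i * p j ^ n j :=
  statement_6_general p n hp hmono hp0 hcard P i j k hij hik hjk hknc hcyc
end

section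
/- Let G be a non-cyclic group (not necessarily finite) and let M be a maximal cyclic subgroup of G. Set A = G \ M and B = M \ M̃ (the set of generators of M). Then (A, B) is a separation of the induced subgraph P(G \ M̃) of the power graph; in particular, M̃ is a cut-set of P(G). -/
open Subgroup

lemma IsSeparationOn.not_preconnected {G : Type*} [Group G] {S A B : Set G}
    (h : IsSeparationOn S A B) : ¬ ((powerGraph G).induce S).Preconnected := by
  obtain ⟨⟨a, ha⟩, ⟨b, hb⟩, hdisj, hunion, hnoAdj⟩ := h
  intro hpre
  have haS : a ∈ S := hunion ▸ Or.inl ha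
  have hbS : b ∈ S := hunion ▸ Or.inr hb
  obtain ⟨p⟩ := hpre ⟨a, haS⟩ ⟨b, hbS⟩
  obtain ⟨d, -, hfst, hsnd⟩ :=
    p.exists_boundary_dart {x | (x : G) ∈ A} ha (hdisj.notMem_of_mem_right hb)
  have hsndA_or_B : (d.snd : G) ∈ A ∪ B := hunion ▸ d.snd.2
  exact hnoAdj _ hfst _ (hsndA_or_B.resolve_left hsnd) d.adj

section

variable {G : Type*} [Group G] {M : Subgroup G}

lemma nonGens_subset : nonGens M ⊆ M := fun _ hx => hx.1

lemma mem_sdiff_nonGens_iff {b : G} : b ∈ (M : Set G) \ nonGens M ↔ zpowers b = M := by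
  refine ⟨fun ⟨hbM, hb⟩ => not_not.1 fun hne => hb ⟨hbM, hne⟩, ?_⟩
  rintro rfl
  exact ⟨mem_zpowers b, fun hb => hb.2 rfl⟩

namespace IsMaxCyclic

lemma compl_nonempty (hM : IsMaxCyclic M) (hnc : ¬ IsCyclic G) : (M : Set G)ᶜ.Nonempty := by
  obtain ⟨g, rfl⟩ := hM.1
  exact Set.nonempty_compl.2 fun hall =>
    hnc (isCyclic_iff_exists_zpowers_eq_top.2 ⟨g, coe_eq_univ.1 hall⟩)

lemma mem_of_le_zpowers (hM : IsMaxCyclic M) {a : G} (h : M ≤ zpowers a) : a ∈ M := by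
  rw [hM.2 _ ⟨a, rfl⟩ h]
  exact mem_zpowers a

lemma mem_of_powerGraph_adj (hM : IsMaxCyclic M) {a b : G} (hb : zpowers b = M)
    (hab : (powerGraph G).Adj a b) : a ∈ M := by
  rcases hab.2 with ha | hb'
  · exact hb ▸ ha
  · exact hM.mem_of_le_zpowers (hb ▸ zpowers_le.2 hb')

end IsMaxCyclic

end

/-- Proposition (all-group): for a non-cyclic group `G` and a maximal cyclic subgroup `M`,
the pair `(G \ M, M \ M̃)` is a separation of the induced subgraph `P(G \ M̃)` of the power
graph; in particular `M̃` is a cut-set of `P(G)`. -/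
theorem statement_7 {G : Type*} [Group G] (hnc : ¬ IsCyclic G)
    (M : Subgroup G) (hM : IsMaxCyclic M) :
    IsSeparationOn ((nonGens M)ᶜ) ((M : Set G)ᶜ) ((M : Set G) \ nonGens M) ∧
    IsCutSet (nonGens M) := by
  have hsep : IsSeparationOn ((nonGens M)ᶜ) ((M : Set G)ᶜ) ((M : Set G) \ nonGens M) := by
    refine ⟨hM.compl_nonempty hnc, ?_, disjoint_compl_left.mono_right Set.sdiff_subset, ?_, ?_⟩
    · obtain ⟨g, rfl⟩ := hM.1
      exact ⟨g, mem_sdiff_nonGens_iff.2 rfl⟩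
    · have : nonGens M ⊆ M := nonGens_subset
      grind
    · exact fun a ha b hb hab => ha (hM.mem_of_powerGraph_adj (mem_sdiff_nonGens_iff.1 hb) hab)
  exact ⟨hsep, hsep.not_preconnected⟩
end

section
/- Let G be a non-cyclic group (not necessarily finite). For every maximal cyclic subgroup M of G, the set M̄, defined as the union of the sets M ∩ ⟨y⟩ over all y ∈ G \ M, is a cut-set of the power graph P(G). -/
/-!
Every element of `M̄` lies in `M`, while a generator `x` of `M` does not lie in `M̄` by maximality
of `M`, and some `y` lies outside `M` because `G` is not cyclic. Once `M̄` is removed, no edge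
leaves `M`: if `u ∈ M \ M̄` is adjacent to `v ∉ M`, then `v ∈ ⟨u⟩ ≤ M` is impossible and
`u ∈ ⟨v⟩` would put `u` in `M ∩ ⟨v⟩ ⊆ M̄`. So `x` and `y` lie in different components.
-/

theorem SimpleGraph.Reachable.mem_of_adj_closed {V : Type*} {Γ : SimpleGraph V} {S : Set V}
    (hS : ∀ u v, Γ.Adj u v → u ∈ S → v ∈ S) {a b : V} (hab : Γ.Reachable a b) (ha : a ∈ S) :
    b ∈ S := by
  rw [SimpleGraph.reachable_iff_reflTransGen] at hab
  induction hab with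
  | refl => exact ha
  | tail _ hbc ih => exact hS _ _ hbc ih

section Mbar

variable {G : Type*} [Group G] {M : Subgroup G}

theorem Mbar_subset : Mbar M ⊆ M := by
  simp only [Mbar, Set.iUnion_subset_iff]
  exact fun _ _ => Set.inter_subset_left

theorem mem_Mbar_of_mem_zpowers {u v : G} (hu : u ∈ M) (hv : v ∉ M)
    (huv : u ∈ Subgroup.zpowers v) : u ∈ Mbar M := by
  simp only [Mbar, Set.mem_iUnion]
  exact ⟨v, hv, hu, huv⟩

theorem IsMaxCyclic.generator_notMem_Mbar (hM : IsMaxCyclic M) {x : G}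
    (hx : M = Subgroup.zpowers x) : x ∉ Mbar M := by
  simp only [Mbar, Set.mem_iUnion]
  rintro ⟨w, hwM, -, hxw⟩
  have hle : M ≤ Subgroup.zpowers w := hx ▸ Subgroup.zpowers_le.mpr hxw
  exact hwM (hM.2 _ ⟨w, rfl⟩ hle ▸ Subgroup.mem_zpowers w)

theorem mem_of_powerGraph_adj_of_notMem_Mbar {u v : G} (hadj : (powerGraph G).Adj u v)
    (huM : u ∈ M) (hu : u ∉ Mbar M) : v ∈ M := by
  rcases hadj.2 with huv | ⟨n, rfl⟩
  · by_contra hv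
    exact hu (mem_Mbar_of_mem_zpowers huM hv huv)
  · exact M.zpow_mem huM n

theorem exists_notMem_of_not_isCyclic (hnc : ¬ IsCyclic G) {x : G}
    (hx : M = Subgroup.zpowers x) : ∃ y, y ∉ M := by
  by_contra! h
  exact hnc (isCyclic_iff_exists_zpowers_eq_top.mpr ⟨x, hx ▸ eq_top_iff.mpr fun g _ => h g⟩)

end Mbar

/-- Proposition (M-bar): for a non-cyclic group `G` and a maximal cyclic subgroup `M`,
the set `M̄ = ⋃_{y ∈ G \ M} (M ∩ ⟨y⟩)` is a cut-set of the power graph `P(G)`. -/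
theorem statement_8 {G : Type*} [Group G] (hnc : ¬ IsCyclic G)
    (M : Subgroup G) (hM : IsMaxCyclic M) :
    IsCutSet (Mbar M) := by
  obtain ⟨x, hx⟩ := hM.1
  obtain ⟨y, hyM⟩ := exists_notMem_of_not_isCyclic hnc hx
  have hxM : x ∈ M := hx ▸ Subgroup.mem_zpowers x
  have hy : y ∉ Mbar M := fun h => hyM (Mbar_subset h)
  intro hpre
  let S : Set ((Mbar M)ᶜ : Set G) := {u | (u : G) ∈ M}
  have hS : ∀ u v, ((powerGraph G).induce (Mbar M)ᶜ).Adj u v → u ∈ S → v ∈ S :=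
    fun u _ hadj huM => mem_of_powerGraph_adj_of_notMem_Mbar hadj huM u.2
  exact hyM ((hpre ⟨x, hM.generator_notMem_Mbar hx⟩ ⟨y, hy⟩).mem_of_adj_closed hS hxM)
end

section
/- Let G be a non-cyclic group and let X be a minimal cut-set of the power graph P(G). Then the following are equivalent: (1) X contains no element which generates a maximal cyclic subgroup of G; (2) the induced subgraph P(M \ X) is connected for every maximal cyclic subgroup M of G. -/
/-!
A maximal cyclic subgroup `⟨m⟩` is a star around its generator `m` in the power graph, which
gives (1) ⟹ (2). Conversely, if `x ∈ X` generates a maximal cyclic subgroup `M`, every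
neighbour of `x` lies in `M`. If moreover `P(M \ X)` is connected, then any path in
`P(G \ (X \ {x}))` through `x` can be rerouted inside `M \ X`, so minimality of `X` would make
`P(G \ X)` connected, contradicting that `X` is a cut-set.
-/

namespace SimpleGraph

variable {V : Type*} {G : SimpleGraph V}

lemma induce_connected_of_forall_adj {s : Set V} {c : V} (hc : c ∈ s)
    (hadj : ∀ v ∈ s, v ≠ c → G.Adj v c) : (G.induce s).Connected := by
  refine (connected_iff_exists_forall_reachable _).2 ⟨⟨c, hc⟩, fun ⟨v, hv⟩ => ?_⟩
  by_cases hvc : v = c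
  · subst hvc; rfl
  · exact (show (G.induce s).Adj ⟨v, hv⟩ ⟨c, hc⟩ from hadj v hv hvc).reachable.symm

lemma preconnected_induce_of_insert {s t : Set V} {x : V}
    (h : (G.induce (insert x s)).Preconnected) (hts : t ⊆ s) (ht : (G.induce t).Preconnected)
    (hnbr : ∀ u ∈ s, G.Adj u x → u ∈ t) : (G.induce s).Preconnected := by
  rintro ⟨c, hc⟩ ⟨d, hd⟩
  set R : s → Prop := fun w => (G.induce s).Reachable ⟨c, hc⟩ w
  have hnbr_reach : ∀ (u v : s), G.Adj u x → G.Adj v x → R u → R v := fun u v hu hv hRu =>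
    hRu.trans <| (ht ⟨u, hnbr u u.2 hu⟩ ⟨v, hnbr v v.2 hv⟩).map (induceHomOfLE G hts).toHom
  have hreach_of_adj : ∀ (w v : s), R w → (w.1 = v.1 ∨ G.Adj w v) → R v := by
    rintro w v hRw (heq | hadj)
    · rwa [← Subtype.ext heq]
    · exact hRw.trans (show (G.induce s).Adj w v from hadj).reachable
  let P : Set ↥(insert x s : Set V) := {v | ∃ w : s, R w ∧ (w.1 = v.1 ∨ G.Adj w v)}
  suffices hdP : (⟨d, Set.mem_insert_of_mem x hd⟩ : ↥(insert x s : Set V)) ∈ P by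
    obtain ⟨w, hRw, hw⟩ := hdP
    exact hreach_of_adj w ⟨d, hd⟩ hRw hw
  by_contra hdP
  obtain ⟨p⟩ := h ⟨c, Set.mem_insert_of_mem x hc⟩ ⟨d, Set.mem_insert_of_mem x hd⟩
  obtain ⟨⟨⟨⟨f, hf⟩, ⟨v, hv⟩⟩, hadj⟩, -, ⟨w, hRw, hw⟩, hvP⟩ :=
    p.exists_boundary_dart P ⟨⟨c, hc⟩, Reachable.refl _, Or.inl rfl⟩ hdP
  change G.Adj f v at hadj
  apply hvP
  by_cases hfs : f ∈ s
  · exact ⟨⟨f, hfs⟩, hreach_of_adj w ⟨f, hfs⟩ hRw hw, Or.inr hadj⟩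
  · obtain rfl : f = x := hf.resolve_right hfs
    have hvs : v ∈ s := hv.resolve_left hadj.ne'
    have hwf : G.Adj w f := hw.resolve_left fun h => hfs ((show (w : V) = f from h) ▸ w.2)
    exact ⟨⟨v, hvs⟩, hnbr_reach w ⟨v, hvs⟩ hwf hadj.symm hRw, Or.inl rfl⟩

end SimpleGraph

section PowerGraph

open Subgroup SimpleGraph

variable {G : Type*} [Group G]

lemma IsMaxCyclic.mem_of_powerGraph_adj_s9 {x u : G} (hx : IsMaxCyclic (zpowers x))
    (hadj : (powerGraph G).Adj u x) : u ∈ zpowers x := by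
  rcases hadj.2 with hu | hx_mem
  · exact hu
  · rw [hx.2 _ ⟨u, rfl⟩ (zpowers_le.2 hx_mem)]
    exact mem_zpowers u

lemma connected_induce_zpowers_diff {m : G} {X : Set G} (hm : m ∉ X) :
    ((powerGraph G).induce ((zpowers m : Set G) \ X)).Connected :=
  induce_connected_of_forall_adj ⟨mem_zpowers m, hm⟩ fun _ hv hne => ⟨hne, Or.inl hv.1⟩

end PowerGraph

theorem statement_9_general {G : Type*} [Group G]
    (X : Set G) (hX : IsMinimalCutSet X) :
    (∀ x ∈ X, ¬ IsMaxCyclic (Subgroup.zpowers x)) ↔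
    (∀ M : Subgroup G, IsMaxCyclic M →
      ((powerGraph G).induce ((M : Set G) \ X)).Connected) := by
  constructor
  · rintro hX_gen M ⟨⟨m, rfl⟩, hmax⟩
    exact connected_induce_zpowers_diff fun hm => hX_gen m hm ⟨⟨m, rfl⟩, hmax⟩
  · intro hconn x hx hmax
    have hinsert : ((powerGraph G).induce (insert x Xᶜ)).Preconnected := by
      have := hX.2 x hx
      rwa [IsCutSet, not_not, Set.compl_sdiff, Set.singleton_union] at this
    exact hX.1 <| SimpleGraph.preconnected_induce_of_insert hinsert (Set.sdiff_subset_compl _ _)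
      (hconn _ hmax).preconnected fun u hu hadj => ⟨hmax.mem_of_powerGraph_adj_s9 hadj, hu⟩

/-- Proposition (gen-connected): for a non-cyclic group `G` and a minimal cut-set `X` of its
power graph, the following are equivalent: (1) no element of `X` generates a maximal cyclic
subgroup of `G`; (2) `P(M \ X)` is connected for every maximal cyclic subgroup `M`. -/
theorem statement_9 {G : Type*} [Group G] (hnc : ¬ IsCyclic G)
    (X : Set G) (hX : IsMinimalCutSet X) :
    (∀ x ∈ X, ¬ IsMaxCyclic (Subgroup.zpowers x)) ↔
    (∀ M : Subgroup G, IsMaxCyclic M →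
      ((powerGraph G).induce ((M : Set G) \ X)).Connected) :=
  statement_9_general X hX
end

section
/- Let G be a non-cyclic group in which every element is contained in some maximal cyclic subgroup of G, and let X be a cut-set of the power graph P(G). If there exists a subset D of G which is contained in every maximal cyclic subgroup of G but is not contained in X, then there exists a maximal cyclic subgroup M of G such that the induced subgraph P(M \ X) is disconnected. -/
/-!
Pick `d ∈ D \ X`. Since `P(G \ X)` is disconnected, some `w ∉ X` lies in a different component
of `P(G \ X)` than `d`. Let `M` be a maximal cyclic subgroup containing `w`; it also contains
`d`. A path from `d` to `w` inside `P(M \ X)` would be a path inside `P(G \ X)`, so `P(M \ X)`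
is disconnected.
-/

namespace SimpleGraph

variable {V : Type*} {G : SimpleGraph V}

theorem exists_not_reachable_of_not_preconnected (h : ¬ G.Preconnected) (u : V) :
    ∃ v, ¬ G.Reachable u v := by
  by_contra! hu
  exact h fun v w => (hu v).symm.trans (hu w)

theorem Reachable.induce_mono {s t : Set V} (hst : s ⊆ t) {u v : s}
    (h : (G.induce s).Reachable u v) :
    (G.induce t).Reachable (Set.inclusion hst u) (Set.inclusion hst v) :=
  h.map (G.induceHomOfLE hst).toHom

end SimpleGraph

theorem statement_10_general {G : Type*} [Group G]
    (hall : ∀ g : G, ∃ M : Subgroup G, IsMaxCyclic M ∧ g ∈ M)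
    (X : Set G) (hX : IsCutSet X)
    (D : Set G) (hD : ∀ M : Subgroup G, IsMaxCyclic M → D ⊆ (M : Set G))
    (hDX : ¬ D ⊆ X) :
    ∃ M : Subgroup G, IsMaxCyclic M ∧
      ¬ ((powerGraph G).induce ((M : Set G) \ X)).Preconnected := by
  obtain ⟨d, hdD, hdX⟩ := Set.not_subset.mp hDX
  obtain ⟨⟨w, hwX⟩, hdw⟩ :=
    SimpleGraph.exists_not_reachable_of_not_preconnected hX ⟨d, hdX⟩
  obtain ⟨M, hM, hwM⟩ := hall w
  refine ⟨M, hM, fun hMX => hdw ?_⟩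
  exact (hMX ⟨d, hD M hM hdD, hdX⟩ ⟨w, hwM, hwX⟩).induce_mono (Set.sdiff_subset_compl _ _)

/-- Proposition (existence-0): `G` non-cyclic, every element lying in some maximal cyclic
subgroup, `X` a cut-set of `P(G)`. If some `D ⊆ G` is contained in every maximal cyclic
subgroup but not in `X`, then `P(M \ X)` is disconnected for some maximal cyclic `M`. -/
theorem statement_10 {G : Type*} [Group G] (hnc : ¬ IsCyclic G)
    (hall : ∀ g : G, ∃ M : Subgroup G, IsMaxCyclic M ∧ g ∈ M)
    (X : Set G) (hX : IsCutSet X)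
    (D : Set G) (hD : ∀ M : Subgroup G, IsMaxCyclic M → D ⊆ (M : Set G))
    (hDX : ¬ D ⊆ X) :
    ∃ M : Subgroup G, IsMaxCyclic M ∧
      ¬ ((powerGraph G).induce ((M : Set G) \ X)).Preconnected :=
  statement_10_general hall X hX D hD hDX
end

section
/- Let G be a finite nilpotent group whose order is divisible by the distinct primes p1 < p2 < ··· < pr, and let Pi be the Sylow pi-subgroup of G for each i. Then a subgroup M of G is a maximal cyclic subgroup of G if and only if M = M1 M2 ··· Mr (the subgroup generated by M1, …, Mr), where Mi = M ∩ Pi is a maximal cyclic subgroup of Pi for each i; equivalently, for any cyclic subgroups Mi ≤ Pi (1 ≤ i ≤ r), the product M1 M2 ··· Mr is a maximal cyclic subgroup of G if and only if each Mi is a maximal cyclic subgroup of Pi. -/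
open Subgroup

lemma Subgroup.isCyclic_iff_exists_eq_zpowers {G : Type*} [Group G] (K : Subgroup G) :
    IsCyclic K ↔ ∃ x, K = zpowers x :=
  K.isCyclic_iff_exists_zpowers_eq_top.trans (exists_congr fun _ => eq_comm)

lemma isMaxCyclic_iff_maximal {G : Type*} [Group G] {M : Subgroup G} :
    IsMaxCyclic M ↔ Maximal (fun K : Subgroup G => IsCyclic K) M := by
  simp only [IsMaxCyclic, Maximal, isCyclic_iff_exists_eq_zpowers]
  refine and_congr_right fun _ => forall_congr' fun N => forall_congr' fun _ => ?_
  exact ⟨fun h hMN => (h hMN).ge, fun h hMN => le_antisymm hMN (h hMN)⟩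

lemma maximal_isCyclic_subgroupOf_iff {G : Type*} [Group G] {H K : Subgroup G} (hKH : K ≤ H) :
    Maximal (fun L : Subgroup H => IsCyclic L) (K.subgroupOf H) ↔
      Maximal (fun L : Subgroup G => IsCyclic L ∧ L ≤ H) K := by
  have hcyc : ∀ {L : Subgroup G}, L ≤ H → (IsCyclic (L.subgroupOf H) ↔ IsCyclic L) :=
    fun hLH => (subgroupOfEquivOfLe hLH).isCyclic
  simp only [Maximal, Subgroup.forall, hcyc hKH, hKH, and_true]
  have hle : ∀ {L M : Subgroup G}, L ≤ H → M ≤ H →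
      (L.subgroupOf H ≤ M.subgroupOf H ↔ L ≤ M) := fun hL hM => by
      rw [← map_subtype_le_map_subtype, map_subgroupOf_eq_of_le hL, map_subgroupOf_eq_of_le hM]
  refine and_congr_right fun _ => forall_congr' fun L => ⟨?_, ?_⟩
  · rintro h ⟨hL, hLH⟩ hKL
    exact (hle hLH hKH).1 (h hLH ((hcyc hLH).2 hL) ((hle hKH hLH).2 hKL))
  · intro h hLH hL hKL
    exact (hle hLH hKH).2 (h ⟨(hcyc hLH).1 hL, hLH⟩ ((hle hKH hLH).1 hKL))

section CoprimeFamily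

variable {G ι : Type*} [Group G] {H : ι → Subgroup G}

def IsProjectionExponent (H : ι → Subgroup G) (i : ι) (e : ℕ) : Prop :=
  (∀ x ∈ H i, x ^ e = x) ∧ ∀ j ≠ i, ∀ x ∈ H j, x ^ e = 1

lemma IsProjectionExponent.mono {C : ι → Subgroup G} {i : ι} {e : ℕ}
    (he : IsProjectionExponent H i e) (hC : ∀ j, C j ≤ H j) : IsProjectionExponent C i e :=
  ⟨fun x hx => he.1 x (hC i hx), fun j hji x hx => he.2 j hji x (hC j hx)⟩

lemma pairwise_commute_of_le
    (hcomm : Pairwise fun i j => ∀ x y : G, x ∈ H i → y ∈ H j → Commute x y)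
    {C : ι → Subgroup G} (hC : ∀ i, C i ≤ H i) :
    Pairwise fun i j => ∀ x y : G, x ∈ C i → y ∈ C j → Commute x y :=
  fun _ _ hij x y hx hy => hcomm hij x y (hC _ hx) (hC _ hy)

variable [Fintype ι] [DecidableEq ι]

lemma noncommPiCoprod_pow_of_isProjectionExponent
    (hcomm : Pairwise fun i j => ∀ x y : G, x ∈ H i → y ∈ H j → Commute x y)
    {i : ι} {e : ℕ} (he : IsProjectionExponent H i e) (u : ∀ j, H j) :
    noncommPiCoprod hcomm u ^ e = u i := by
  have hu : u ^ e = Pi.mulSingle i (u i) := by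
    funext j
    rcases eq_or_ne j i with rfl | hji
    · simp [Subtype.ext_iff, he.1 _ (u j).2]
    · simp [Subtype.ext_iff, hji, he.2 j hji _ (u j).2]
  rw [← map_pow, hu, noncommPiCoprod_mulSingle]

variable [∀ i, Finite (H i)]

lemma exists_isProjectionExponent
    (hcop : Pairwise fun i j => (Nat.card (H i)).Coprime (Nat.card (H j))) (i : ι) :
    ∃ e, IsProjectionExponent H i e := by
  set m := ∏ j ∈ Finset.univ.erase i, Nat.card (H j)
  have hm : m.Coprime (Nat.card (H i)) :=
    Nat.Coprime.prod_left fun j hj => hcop (Finset.ne_of_mem_erase hj)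
  -- Euler: `m ^ φ |H i| ≡ 1 mod |H i|`, while every other `|H j|` divides `m`.
  refine ⟨m ^ (Nat.card (H i)).totient, fun x hx => ?_, fun j hji x hx => ?_⟩
  · conv_rhs => rw [← pow_one x]
    rw [pow_eq_pow_iff_modEq]
    exact (Nat.ModEq.pow_totient hm).of_dvd ((H i).orderOf_dvd_natCard hx)
  · refine orderOf_dvd_iff_pow_eq_one.mp (((H j).orderOf_dvd_natCard hx).trans ?_)
    exact (Finset.dvd_prod_of_mem _ (Finset.mem_erase.mpr ⟨hji, Finset.mem_univ j⟩)).trans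
      (dvd_pow_self m (Nat.totient_pos.mpr Nat.card_pos).ne')

variable (hcomm : Pairwise fun i j => ∀ x y : G, x ∈ H i → y ∈ H j → Commute x y)
  (hcop : Pairwise fun i j => (Nat.card (H i)).Coprime (Nat.card (H j)))
include hcomm hcop

lemma iSup_inf_eq_of_le {C : ι → Subgroup G} (hC : ∀ j, C j ≤ H j) (i : ι) :
    (⨆ j, C j) ⊓ H i = C i := by
  refine le_antisymm ?_ (le_inf (le_iSup C i) (hC i))
  rintro g ⟨hg, hgi⟩
  have hcommC := pairwise_commute_of_le hcomm hC
  rw [← noncommPiCoprod_range (hcomm := hcommC)] at hg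
  obtain ⟨u, rfl⟩ := hg
  obtain ⟨e, he⟩ := exists_isProjectionExponent hcop i
  rw [← he.1 _ hgi, noncommPiCoprod_pow_of_isProjectionExponent hcommC (he.mono hC)]
  exact (u i).2

lemma iSup_inf_eq_of_le_iSup {K : Subgroup G} (hK : K ≤ ⨆ i, H i) : ⨆ i, K ⊓ H i = K := by
  refine le_antisymm (iSup_le fun i => inf_le_left) fun g hg => ?_
  obtain ⟨u, rfl⟩ : g ∈ (noncommPiCoprod hcomm).range := by
    rw [noncommPiCoprod_range]
    exact hK hg
  rw [noncommPiCoprod_apply]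
  refine noncommProd_mem _ _ fun i _ => mem_iSup_of_mem i ⟨?_, (u i).2⟩
  obtain ⟨e, he⟩ := exists_isProjectionExponent hcop i
  rw [← noncommPiCoprod_pow_of_isProjectionExponent hcomm he u]
  exact pow_mem hg e

lemma isCyclic_iSup {C : ι → Subgroup G} (hC : ∀ i, C i ≤ H i)
    (hcyc : ∀ i, IsCyclic (C i)) :
    IsCyclic ↥(⨆ i, C i) := by
  have hcommC := pairwise_commute_of_le hcomm hC
  choose c hc using fun i => (C i).isCyclic_iff_exists_eq_zpowers.mp (hcyc i)
  set x := noncommPiCoprod hcommC fun i => ⟨c i, hc i ▸ mem_zpowers _⟩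
  refine (isCyclic_iff_exists_eq_zpowers _).mpr ⟨x, le_antisymm (iSup_le fun i => ?_) ?_⟩
  · obtain ⟨e, he⟩ := exists_isProjectionExponent hcop i
    have hxe : x ^ e = c i :=
      noncommPiCoprod_pow_of_isProjectionExponent hcommC (he.mono hC) _
    rw [hc i, zpowers_le, ← hxe]
    exact pow_mem (mem_zpowers x) e
  · rw [zpowers_le, ← noncommPiCoprod_range (hcomm := hcommC)]
    exact ⟨_, rfl⟩

theorem maximal_isCyclic_iff_forall_inf (htop : ⨆ i, H i = ⊤) {K : Subgroup G} :
    Maximal (fun L : Subgroup G => IsCyclic L) K ↔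
      ∀ i, Maximal (fun L : Subgroup G => IsCyclic L ∧ L ≤ H i) (K ⊓ H i) := by
  have hsplit : ∀ L : Subgroup G, ⨆ i, L ⊓ H i = L :=
    fun L => iSup_inf_eq_of_le_iSup hcomm hcop (htop ▸ le_top)
  constructor
  · intro hmax i
    have : IsCyclic K := hmax.1
    refine ⟨⟨isCyclic_of_le inf_le_left, inf_le_right⟩, fun N ⟨hN, hNH⟩ hKN => ?_⟩
    set C := Function.update (fun j => K ⊓ H j) i N
    have hCi : C i = N := Function.update_self ..
    have hC : ∀ j, C j ≤ H j ∧ IsCyclic (C j) ∧ K ⊓ H j ≤ C j := fun j => by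
      rcases eq_or_ne j i with rfl | hji
      · rw [hCi]
        exact ⟨hNH, hN, hKN⟩
      · rw [show C j = K ⊓ H j from Function.update_of_ne hji ..]
        exact ⟨inf_le_right, isCyclic_of_le inf_le_left, le_rfl⟩
    have hKC : K ≤ ⨆ j, C j := (hsplit K).ge.trans (iSup_mono fun j => (hC j).2.2)
    have hCK : ⨆ j, C j ≤ K :=
      hmax.2 (isCyclic_iSup hcomm hcop (fun j => (hC j).1) fun j => (hC j).2.1) hKC
    calc N = (⨆ j, C j) ⊓ H i := by
          rw [iSup_inf_eq_of_le hcomm hcop (fun j => (hC j).1), hCi]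
      _ ≤ K ⊓ H i := inf_le_inf_right _ hCK
  · intro h
    refine ⟨hsplit K ▸ isCyclic_iSup hcomm hcop (fun i => inf_le_right) fun i => (h i).1.1,
      fun N hN hKN => ?_⟩
    rw [← hsplit K, ← hsplit N]
    exact iSup_mono fun i => (h i).2 ⟨isCyclic_of_le inf_le_left, inf_le_right⟩
      (inf_le_inf_right _ hKN)

end CoprimeFamily

namespace Sylow

variable {G ι : Type*} [Group G] [Finite G] {p : ι → ℕ} (hp : ∀ i, (p i).Prime)
  (P : ∀ i, Sylow (p i) G)
include hp

lemma pairwise_commute_of_isNilpotent [Group.IsNilpotent G] (hinj : Function.Injective p) :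
    Pairwise fun i j => ∀ x y : G, x ∈ (P i : Subgroup G) → y ∈ (P j : Subgroup G) →
      Commute x y := by
  intro i j hij
  have := Fact.mk (hp i)
  have := Fact.mk (hp j)
  have hnc := Group.normalizerCondition_of_isNilpotent (G := G)
  exact commute_of_normal_of_disjoint _ _ ((P i).normal_of_normalizerCondition hnc)
    ((P j).normal_of_normalizerCondition hnc)
    (IsPGroup.disjoint_of_ne _ _ (hinj.ne hij) _ _ (P i).isPGroup' (P j).isPGroup')

lemma pairwise_coprime_card (hinj : Function.Injective p) :
    Pairwise fun i j => (Nat.card (P i : Subgroup G)).Coprime (Nat.card (P j : Subgroup G)) := by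
  intro i j hij
  have := Fact.mk (hp i)
  have := Fact.mk (hp j)
  exact IsPGroup.coprime_card_of_ne _ _ (hinj.ne hij) _ _ (P i).isPGroup' (P j).isPGroup'

lemma iSup_eq_top_of_card_dvd_prod [Fintype ι] {n : ι → ℕ}
    (hcard : Nat.card G ∣ ∏ i, p i ^ n i) : ⨆ i, (P i : Subgroup G) = ⊤ := by
  rw [← index_eq_one]
  refine Nat.Coprime.eq_one_of_dvd (Nat.Coprime.prod_right fun i _ => ?_)
    ((index_dvd_card _).trans hcard)
  have := Fact.mk (hp i)
  refine Nat.Coprime.pow_right _ (Nat.coprime_comm.mp ((hp i).coprime_iff_not_dvd.mpr ?_))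
  exact fun hdvd => (P i).not_dvd_index
    (hdvd.trans (index_dvd_of_le (le_iSup (fun i => (P i : Subgroup G)) i)))

end Sylow

theorem statement_11_general {G : Type*} [Group G] [Fintype G] (hnil : Group.IsNilpotent G)
    (r : ℕ) (p n : Fin r → ℕ) (hp : ∀ i, (p i).Prime) (hmono : StrictMono p)
    (hcard : Nat.card G = ∏ i, p i ^ n i)
    (P : ∀ i, Sylow (p i) G) :
    (∀ M : Subgroup G, IsMaxCyclic M ↔
      (M = (⨆ i, (M ⊓ (P i : Subgroup G))) ∧
        ∀ i, IsMaxCyclic ((M ⊓ (P i : Subgroup G)).subgroupOf (P i : Subgroup G)))) ∧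
    (∀ Mi : Fin r → Subgroup G, (∀ i, Mi i ≤ (P i : Subgroup G)) →
      (∀ i, ∃ x : G, Mi i = Subgroup.zpowers x) →
      (IsMaxCyclic (⨆ i, Mi i) ↔
        ∀ i, IsMaxCyclic ((Mi i).subgroupOf (P i : Subgroup G)))) := by
  have hcomm := Sylow.pairwise_commute_of_isNilpotent hp P hmono.injective
  have hcop := Sylow.pairwise_coprime_card hp P hmono.injective
  have htop := Sylow.iSup_eq_top_of_card_dvd_prod hp P hcard.dvd
  have hmax (M : Subgroup G) : IsMaxCyclic M ↔
      ∀ i, IsMaxCyclic ((M ⊓ (P i : Subgroup G)).subgroupOf (P i : Subgroup G)) := by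
    simp only [isMaxCyclic_iff_maximal, maximal_isCyclic_subgroupOf_iff inf_le_right]
    exact maximal_isCyclic_iff_forall_inf hcomm hcop htop
  refine ⟨fun M => ?_, fun Mi hle _ => ?_⟩
  · rw [hmax, iSup_inf_eq_of_le_iSup hcomm hcop (htop ▸ le_top), eq_self, true_and]
  · simp only [hmax, iSup_inf_eq_of_le hcomm hcop hle]

/-- Lemma (max-cyclic): for a finite nilpotent group `G` of order `∏ pᵢ^{nᵢ}` with Sylow
subgroups `P i`, a subgroup `M` is a maximal cyclic subgroup of `G` iff `M` is the product of
the subgroups `M ⊓ P i`, each maximal cyclic in `P i`; equivalently, for cyclic subgroups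
`Mᵢ ≤ P i`, the product `⨆ i, Mᵢ` is maximal cyclic in `G` iff each `Mᵢ` is maximal cyclic
in `P i`. -/
theorem statement_11 {G : Type*} [Group G] [Fintype G] (hnil : Group.IsNilpotent G)
    (r : ℕ) (p n : Fin r → ℕ) (hp : ∀ i, (p i).Prime) (hmono : StrictMono p)
    (hn : ∀ i, 1 ≤ n i) (hcard : Nat.card G = ∏ i, p i ^ n i)
    (P : ∀ i, Sylow (p i) G) :
    (∀ M : Subgroup G, IsMaxCyclic M ↔
      (M = (⨆ i, (M ⊓ (P i : Subgroup G))) ∧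
        ∀ i, IsMaxCyclic ((M ⊓ (P i : Subgroup G)).subgroupOf (P i : Subgroup G)))) ∧
    (∀ Mi : Fin r → Subgroup G, (∀ i, Mi i ≤ (P i : Subgroup G)) →
      (∀ i, ∃ x : G, Mi i = Subgroup.zpowers x) →
      (IsMaxCyclic (⨆ i, Mi i) ↔
        ∀ i, IsMaxCyclic ((Mi i).subgroupOf (P i : Subgroup G)))) :=
  statement_11_general hnil r p n hp hmono hcard P
end

section
/- Let G be a finite non-cyclic nilpotent group and let C be a maximal cyclic subgroup of G of minimum possible order. Then |M̃| ≥ |C̃| for every maximal cyclic subgroup M of G, where M̃ denotes the set of non-generators of M. -/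
section Aux

/-!
In a finite nilpotent group every prime `p` dividing `|G|` divides `|Z(G)|`, because the normal
Sylow `p`-subgroup meets the centre nontrivially. If `⟨g⟩` is maximal cyclic and `z` is central
of order `p ∤ ord g`, then `g` is a power of `gz`, so `⟨g⟩ ⊊ ⟨gz⟩`; hence the order of every maximal
cyclic subgroup has the same prime divisors as `|G|`. For integers with a fixed set of prime
divisors, `n - φ(n) = n (1 - ∏ (1 - 1/p))` is increasing in `n`.
-/

open Subgroup
open scoped commutatorElement

theorem Subgroup.Normal.inf_center_ne_bot {G : Type*} [Group G] [Group.IsNilpotent G]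
    {N : Subgroup G} (hN : N.Normal) (hN_ne : N ≠ ⊥) : N ⊓ center G ≠ ⊥ := by
  classical
  have hex : ∃ n, N ⊓ upperCentralSeries G n ≠ ⊥ := by
    obtain ⟨n, hn⟩ := Group.IsNilpotent.nilpotent G
    exact ⟨n, by rwa [hn, inf_top_eq]⟩
  obtain ⟨m, hm⟩ : ∃ m, Nat.find hex = m + 1 :=
    Nat.exists_eq_succ_of_ne_zero fun h => Nat.find_spec hex (by simp [h])
  have hbelow : N ⊓ upperCentralSeries G m = ⊥ :=
    not_ne_iff.mp (Nat.find_min hex (by omega))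
  have hcentral : N ⊓ upperCentralSeries G (m + 1) ≤ center G := by
    rintro x ⟨hxN, hxZ⟩
    refine mem_center_iff.mpr fun y => (commutatorElement_eq_one_iff_mul_comm.mp ?_).symm
    have hmemN : ⁅x, y⁆ ∈ N := by
      rw [commutatorElement_def, show x * y * x⁻¹ * y⁻¹ = x * (y * x⁻¹ * y⁻¹) by group]
      exact N.mul_mem hxN (hN.conj_mem _ (N.inv_mem hxN) y)
    have hmem : ⁅x, y⁆ ∈ N ⊓ upperCentralSeries G m :=
      ⟨hmemN, mem_upperCentralSeries_succ_iff.mp hxZ y⟩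
    rwa [hbelow, mem_bot] at hmem
  intro h
  apply Nat.find_spec hex
  rw [hm, eq_bot_iff, ← h]
  exact le_inf inf_le_left hcentral

theorem prime_dvd_card_center_of_isNilpotent {G : Type*} [Group G] [Finite G]
    [Group.IsNilpotent G] {p : ℕ} (hp : p.Prime) (hpG : p ∣ Nat.card G) :
    p ∣ Nat.card (center G) := by
  have : Fact p.Prime := ⟨hp⟩
  let P : Sylow p G := default
  have hne := Normal.inf_center_ne_bot inferInstance (P.ne_bot_of_dvd_card hpG)
  have hpgrp : IsPGroup p ↥((P : Subgroup G) ⊓ center G) := P.isPGroup'.to_le inf_le_left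
  refine dvd_trans ?_ (card_dvd_of_le (inf_le_right (a := (P : Subgroup G))))
  exact hpgrp.card_eq_or_dvd.resolve_left fun h => hne (card_eq_one.mp h)

theorem IsMaxCyclic.eq_one_of_commute_of_coprime {G : Type*} [Group G] {g z : G}
    (hg : IsMaxCyclic (zpowers g)) (hgz : Commute g z)
    (hcop : (orderOf g).Coprime (orderOf z)) : z = 1 := by
  obtain ⟨k, hk⟩ := exists_pow_eq_self_of_coprime hcop.symm
  have hg_mem : g ∈ zpowers (g * z) := by
    refine mem_zpowers_iff.mpr ⟨(orderOf z * k : ℕ), ?_⟩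
    rw [zpow_natCast, pow_mul, hgz.mul_pow, pow_orderOf_eq_one, mul_one, hk]
  have heq := hg.2 _ ⟨_, rfl⟩ (zpowers_le.mpr hg_mem)
  have hz : z ∈ zpowers g := by
    have hgz_mem : g * z ∈ zpowers g := heq ▸ mem_zpowers _
    simpa using mul_mem (inv_mem (mem_zpowers g)) hgz_mem
  exact orderOf_eq_one_iff.mp (hcop.symm.eq_one_of_dvd (orderOf_dvd_of_mem_zpowers hz))

theorem IsMaxCyclic.prime_dvd_orderOf_of_dvd_card_center {G : Type*} [Group G] [Finite G]
    {g : G} (hg : IsMaxCyclic (zpowers g)) {p : ℕ} (hp : p.Prime)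
    (hpZ : p ∣ Nat.card (center G)) : p ∣ orderOf g := by
  have : Fact p.Prime := ⟨hp⟩
  by_contra hpg
  obtain ⟨z, hz⟩ := exists_prime_orderOf_dvd_card' p hpZ
  have hz1 := hg.eq_one_of_commute_of_coprime (z := (z : G)) (mem_center_iff.mp z.2 g)
    (by rw [orderOf_coe, hz]; exact (hp.coprime_iff_not_dvd.mpr hpg).symm)
  rw [← orderOf_coe, hz1, orderOf_one] at hz
  exact hp.one_lt.ne hz

theorem IsMaxCyclic.primeFactors_orderOf_of_isNilpotent {G : Type*} [Group G] [Finite G]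
    [Group.IsNilpotent G] {g : G} (hg : IsMaxCyclic (zpowers g)) :
    (orderOf g).primeFactors = (Nat.card G).primeFactors := by
  refine (Nat.primeFactors_mono (orderOf_dvd_natCard g) Nat.card_pos.ne').antisymm fun p hp => ?_
  rw [Nat.mem_primeFactors] at hp ⊢
  exact ⟨hp.1, hg.prime_dvd_orderOf_of_dvd_card_center hp.1
    (prime_dvd_card_center_of_isNilpotent hp.1 hp.2.1), (orderOf_pos g).ne'⟩

theorem zpowers_eq_zpowers_iff_orderOf_eq {G : Type*} [Group G] [Finite G] {g x : G}
    (hx : x ∈ zpowers g) : zpowers x = zpowers g ↔ orderOf x = orderOf g := by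
  refine ⟨fun h => by rw [← Nat.card_zpowers, h, Nat.card_zpowers], fun h => ?_⟩
  exact eq_of_le_of_card_ge (zpowers_le.mpr hx) (by rw [Nat.card_zpowers, Nat.card_zpowers, h])

theorem ncard_generators_zpowers {G : Type*} [Group G] [Finite G] (g : G) :
    {x | x ∈ zpowers g ∧ orderOf x = orderOf g}.ncard = (orderOf g).totient := by
  classical
  have : Fintype (zpowers g) := Fintype.ofFinite _
  have himage : {x | x ∈ zpowers g ∧ orderOf x = orderOf g} =
      Subtype.val '' (({x : zpowers g | orderOf x = orderOf g} : Finset _) : Set (zpowers g)) := by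
    ext x
    simp only [Set.mem_ofPred_eq, Finset.coe_filter, Finset.mem_univ, true_and, Set.mem_image,
      Subtype.exists, Subgroup.orderOf_mk, exists_and_right, exists_eq_right, exists_prop]
  rw [himage, Set.ncard_image_of_injective _ Subtype.val_injective, Set.ncard_coe_finset]
  exact IsCyclic.card_orderOf_eq_totient (by rw [← Nat.card_eq_fintype_card, Nat.card_zpowers])

theorem ncard_nonGens_zpowers {G : Type*} [Group G] [Finite G] (g : G) :
    (nonGens (zpowers g)).ncard = orderOf g - (orderOf g).totient := by
  have hdiff : nonGens (zpowers g) =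
      (zpowers g : Set G) \ {x | x ∈ zpowers g ∧ orderOf x = orderOf g} := by
    ext x
    simp +contextual [nonGens, zpowers_eq_zpowers_iff_orderOf_eq]
  rw [hdiff, Set.ncard_sdiff (fun x hx => hx.1), ncard_generators_zpowers, ← Nat.card_coe_set_eq,
    SetLike.coe_sort_coe, Nat.card_zpowers]

theorem Nat.sub_totient_le_sub_totient {n m : ℕ} (hnm : n ≤ m)
    (h : n.primeFactors = m.primeFactors) : n - n.totient ≤ m - m.totient := by
  set P := ∏ p ∈ n.primeFactors, p
  set Q := ∏ p ∈ n.primeFactors, (p - 1)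
  have hP : 0 < P := Finset.prod_pos fun p hp => (Nat.prime_of_mem_primeFactors hp).pos
  have hn : n.totient * P = n * Q := Nat.totient_mul_prod_primeFactors n
  have hm : m.totient * P = m * Q := by
    simp only [P, Q, h]; exact Nat.totient_mul_prod_primeFactors m
  refine Nat.le_of_mul_le_mul_right ?_ hP
  rw [Nat.sub_mul, Nat.sub_mul, hn, hm, ← Nat.mul_sub_left_distrib, ← Nat.mul_sub_left_distrib]
  exact Nat.mul_le_mul_right _ hnm

theorem statement_12_general {G : Type*} [Group G] [Fintype G]
    (hnil : Group.IsNilpotent G)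
    (C : Subgroup G) (hC : IsMaxCyclic C)
    (hCmin : ∀ M : Subgroup G, IsMaxCyclic M → Nat.card ↥C ≤ Nat.card ↥M) :
    ∀ M : Subgroup G, IsMaxCyclic M → (nonGens C).ncard ≤ (nonGens M).ncard := by
  intro M hM
  obtain ⟨c, rfl⟩ := hC.1
  obtain ⟨m, rfl⟩ := hM.1
  have hle : orderOf c ≤ orderOf m := by simpa only [Nat.card_zpowers] using hCmin _ hM
  rw [ncard_nonGens_zpowers, ncard_nonGens_zpowers]
  exact Nat.sub_totient_le_sub_totient hle
    (hC.primeFactors_orderOf_of_isNilpotent.trans hM.primeFactors_orderOf_of_isNilpotent.symm)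

/-- Proposition (size-compare): `G` finite non-cyclic nilpotent, `C` a maximal cyclic subgroup
of minimum possible order; then `|M̃| ≥ |C̃|` for every maximal cyclic subgroup `M`. -/
theorem statement_12 {G : Type*} [Group G] [Fintype G]
    (hnil : Group.IsNilpotent G) (hnc : ¬ IsCyclic G)
    (C : Subgroup G) (hC : IsMaxCyclic C)
    (hCmin : ∀ M : Subgroup G, IsMaxCyclic M → Nat.card ↥C ≤ Nat.card ↥M) :
    ∀ M : Subgroup G, IsMaxCyclic M → (nonGens C).ncard ≤ (nonGens M).ncard :=
  statement_12_general hnil C hC hCmin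
end Aux
end
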